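/- arXiv:1402.5105 — 4 statements merged into one kernel-verified Lean document; each statement's English description precedes it below -/
import Mathlib

section
/- If f : X → Y is a coarse equivalence between uniformly locally finite metric spaces X and Y, then there exist a natural number n and an injective, uniformly bornologous map f̃ : X → Y × {1,...,n} such that f = pr ∘ f̃, where pr is the projection onto Y. -/
/-- A metric space is uniformly locally finite (bounded geometry) if the
cardinalities of closed balls of radius `R` are uniformly bounded, for every `R`. -/
def IsULF (X : Type*) [MetricSpace X] : Prop :=
  ∀ R : ℝ, 0 < R → ∃ n : ℕ, ∀ x : X,
    {y : X | dist x y ≤ R}.Finite ∧ {y : X | dist x y ≤ R}.ncard ≤ n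

/-- A map between metric spaces is uniformly bornologous. -/
def UniformlyBornologous {X Y : Type*} [MetricSpace X] [MetricSpace Y] (f : X → Y) : Prop :=
  ∀ R : ℝ, 0 < R → ∃ S : ℝ, ∀ x x' : X, dist x x' ≤ R → dist (f x) (f x') ≤ S

/-- If `f : X → Y` is a coarse equivalence between uniformly locally finite metric
spaces, then there are `n : ℕ` and an injective uniformly bornologous map
`f̃ : X → Y × Fin n` (with the metric `d((y,i),(z,j)) = d(y,z) + |i - j|`)
such that `f = pr ∘ f̃`. -/
theorem stmt0 {X Y : Type*} [MetricSpace X] [MetricSpace Y]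
    (hX : IsULF X) (hY : IsULF Y)
    (f : X → Y) (g : Y → X)
    (hf : UniformlyBornologous f) (hg : UniformlyBornologous g)
    (hgf : ∃ C : ℝ, ∀ x : X, dist (g (f x)) x ≤ C)
    (hfg : ∃ C : ℝ, ∀ y : Y, dist (f (g y)) y ≤ C) :
    ∃ (n : ℕ) (ft : X → Y × Fin n),
      Function.Injective ft ∧
      (∀ x : X, (ft x).1 = f x) ∧
      ∀ R : ℝ, 0 < R → ∃ S : ℝ, ∀ x x' : X, dist x x' ≤ R →
        dist (ft x).1 (ft x').1 + |(((ft x).2 : ℕ) : ℝ) - (((ft x').2 : ℕ) : ℝ)| ≤ S := by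
  classical
  obtain ⟨C, hC⟩ := hgf
  -- fibers of f are uniformly finite
  set R0 : ℝ := max C 1 with hR0
  have hR0pos : 0 < R0 := lt_of_lt_of_le one_pos (le_max_right _ _)
  obtain ⟨n, hn⟩ := hX R0 hR0pos
  have hfib : ∀ y : Y, (f ⁻¹' {y}).Finite ∧ (f ⁻¹' {y}).ncard ≤ n := by
    intro y
    have hsub : f ⁻¹' {y} ⊆ {x : X | dist (g y) x ≤ R0} := by
      intro x hx
      simp only [Set.mem_preimage, Set.mem_singleton_iff] at hx
      have := hC x
      rw [hx] at this
      exact le_trans this (le_max_left _ _)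
    obtain ⟨hfin, hcard⟩ := hn (g y)
    exact ⟨hfin.subset hsub, le_trans (Set.ncard_le_ncard hsub hfin) hcard⟩
  -- choose an injection of each fiber into Fin n
  have hemb : ∀ y : Y, Nonempty ((f ⁻¹' {y}) ↪ Fin n) := by
    intro y
    obtain ⟨hfin, hcard⟩ := hfib y
    haveI := hfin.fintype
    apply Function.Embedding.nonempty_iff_card_le.mpr
    rw [Fintype.card_fin]
    rwa [← Nat.card_eq_fintype_card, Nat.card_coe_set_eq]
  have e := fun y => (hemb y).some
  refine ⟨n, fun x => (f x, e (f x) ⟨x, rfl⟩), ?_, fun x => rfl, ?_⟩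
  · -- injectivity
    have key : ∀ (y y' : Y) (h : y = y') (x : X) (hx : f x = y) (hx' : f x = y'),
        e y ⟨x, hx⟩ = e y' ⟨x, hx'⟩ := by
      rintro y y' rfl x hx hx'; rfl
    intro x x' h
    have h1 : f x = f x' := congrArg Prod.fst h
    have h2 : e (f x) ⟨x, rfl⟩ = e (f x') ⟨x', rfl⟩ := congrArg Prod.snd h
    rw [key (f x') (f x) h1.symm x' rfl h1.symm] at h2
    have := (e (f x)).injective h2
    exact (Subtype.ext_iff.mp this)
  · -- uniformly bornologous
    intro R hR
    obtain ⟨S, hS⟩ := hf R hR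
    refine ⟨S + n, fun x x' hxx' => ?_⟩
    refine add_le_add (hS x x' hxx') ?_
    have h1 : ((e (f x) ⟨x, rfl⟩ : Fin n) : ℕ) < n := (e (f x) ⟨x, rfl⟩).isLt
    have h2 : ((e (f x') ⟨x', rfl⟩ : Fin n) : ℕ) < n := (e (f x') ⟨x', rfl⟩).isLt
    rw [abs_sub_le_iff]
    constructor <;> push_cast <;> [skip; skip] <;>
      nlinarith [Nat.cast_nonneg (α := ℝ) ((e (f x) ⟨x, rfl⟩ : Fin n) : ℕ),
        Nat.cast_nonneg (α := ℝ) ((e (f x') ⟨x', rfl⟩ : Fin n) : ℕ),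
        (Nat.cast_lt (α := ℝ)).mpr h1, (Nat.cast_lt (α := ℝ)).mpr h2]
end

section
/- For a uniformly locally finite metric space X, every partial translation in the algebraic uniform Roe algebra ℂ_u[X] is a linear combination of products of bounded diagonal operators and full translations; consequently ℂ_u[X] = span(ℓ∞(X) · Γ_X), where Γ_X is the group of full translations in ℂ_u[X]. -/
attribute [local instance] Classical.propDecidable

/-- The algebraic uniform Roe algebra of `X`: kernels with uniformly bounded
entries and finite propagation. -/
def RoeSet (X : Type*) [MetricSpace X] : Set (X → X → ℂ) :=
  {a | (∃ C : ℝ, ∀ x y, ‖a x y‖ ≤ C) ∧ ∃ R : ℝ, ∀ x y, a x y ≠ 0 → dist x y ≤ R}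

/-- The set of kernels of the form (bounded diagonal) · (full translation):
`k x y = f x * [x = φ y]` where `f ∈ ℓ∞(X)` and `φ` is a bijection of `X` with
bounded displacement. -/
def DiagFullTrans (X : Type*) [MetricSpace X] : Set (X → X → ℂ) :=
  {k | ∃ (f : X → ℂ) (φ : X ≃ X), (∃ C : ℝ, ∀ x, ‖f x‖ ≤ C) ∧
        (∃ D : ℝ, ∀ y, dist (φ y) y ≤ D) ∧
        k = fun x y => f x * (if x = φ y then 1 else 0)}

set_option linter.unusedSectionVars false
set_option linter.unusedVariables false

namespace Stmt2Aux
variable {X : Type*} [MetricSpace X] [Nonempty X]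

/-- kernel of a partial translation -/
noncomputable def ker (φ : X → X) (S : Set X) : X → X → ℂ :=
  fun x y => if y ∈ S ∧ x = φ y then (1 : ℂ) else 0

lemma ker_union (φ : X → X) {S T : Set X} (h : ∀ a ∈ S, a ∉ T) :
    ker φ (S ∪ T) = ker φ S + ker φ T := by
  funext x y
  simp only [ker, Pi.add_apply, Set.mem_union]
  by_cases hS : y ∈ S <;> by_cases hT : y ∈ T
  · exact absurd hT (h y hS)
  · by_cases hp : x = φ y <;> simp [hS, hT, hp]
  · by_cases hp : x = φ y <;> simp [hS, hT, hp]
  · simp [hS, hT]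

/-- fixed point piece -/
lemma fixed_piece (φ : X → X) (B : Set X) (hfix : ∀ b ∈ B, φ b = b) :
    ker φ B ∈ DiagFullTrans X := by
  refine ⟨fun x => if x ∈ B then 1 else 0, Equiv.refl X, ⟨1, fun x => ?_⟩,
    ⟨0, fun y => by simp⟩, ?_⟩
  · by_cases h : x ∈ B <;> simp [h]
  · funext x y
    simp only [ker, Equiv.refl_apply]
    by_cases hy : y ∈ B
    · by_cases hp : x = y
      · subst hp; simp [hy, hfix _ hy]
      · have : ¬ (y ∈ B ∧ x = φ y) := by
          rintro ⟨-, h2⟩; rw [hfix y hy] at h2; exact hp h2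
        simp [this, hp]
    · by_cases hp : x = y
      · subst hp; simp [hy]
      · simp [hy, hp]

/-- disjoint piece -/
lemma disj_piece (φ : X → X) (A B : Set X) (hB : B ⊆ A) (hinj : Set.InjOn φ A)
    (hdisj : ∀ b ∈ B, φ b ∉ B) (D : ℝ) (hD : ∀ a ∈ A, dist a (φ a) ≤ D) :
    ker φ B ∈ DiagFullTrans X := by
  classical
  set ψ := Function.invFunOn φ A with hψ
  have hψφ : ∀ a ∈ A, ψ (φ a) = a := fun a ha => hinj.leftInvOn_invFunOn ha
  -- the involution
  set σ : X → X := fun x => if x ∈ B then φ x else if x ∈ φ '' B then ψ x else x with hσ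
  have hBnotim : ∀ b ∈ B, b ∉ φ '' B := by
    rintro b hb ⟨b', hb', rfl⟩; exact hdisj b' hb' hb
  have hσB : ∀ b ∈ B, σ b = φ b := fun b hb => if_pos hb
  have hσim : ∀ b ∈ B, σ (φ b) = b := by
    intro b hb
    have h1 : φ b ∉ B := hdisj b hb
    have h2 : φ b ∈ φ '' B := ⟨b, hb, rfl⟩
    simp only [hσ, if_neg h1, if_pos h2]
    exact hψφ b (hB hb)
  have hσelse : ∀ x, x ∉ B → x ∉ φ '' B → σ x = x := by
    intro x h1 h2; simp only [hσ, if_neg h1, if_neg h2]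
  have hinvol : ∀ x, σ (σ x) = x := by
    intro x
    by_cases h1 : x ∈ B
    · rw [hσB x h1, hσim x h1]
    · by_cases h2 : x ∈ φ '' B
      · obtain ⟨b, hb, rfl⟩ := h2
        rw [hσim b hb, hσB b hb]
      · rw [hσelse x h1 h2, hσelse x h1 h2]
  set e : X ≃ X := ⟨σ, σ, hinvol, hinvol⟩ with he
  refine ⟨fun x => if x ∈ φ '' B then 1 else 0, e, ⟨1, fun x => ?_⟩,
    ⟨max D 0, fun y => ?_⟩, ?_⟩
  · by_cases h : x ∈ φ '' B <;> simp [h]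
  · show dist (σ y) y ≤ max D 0
    by_cases h1 : y ∈ B
    · rw [hσB y h1, dist_comm]
      exact le_trans (hD y (hB h1)) (le_max_left _ _)
    · by_cases h2 : y ∈ φ '' B
      · obtain ⟨b, hb, rfl⟩ := h2
        rw [hσim b hb]
        exact le_trans (hD b (hB hb)) (le_max_left _ _)
      · rw [hσelse y h1 h2]; simp
  · funext x y
    show (if y ∈ B ∧ x = φ y then (1:ℂ) else 0)
        = (if x ∈ φ '' B then 1 else 0) * (if x = σ y then 1 else 0)
    by_cases h1 : y ∈ B
    · rw [hσB y h1]
      by_cases hp : x = φ y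
      · subst hp
        simp [h1, Set.mem_image_of_mem φ h1]
      · simp [h1, hp]
    · by_cases h2 : y ∈ φ '' B
      · obtain ⟨b, hb, rfl⟩ := h2
        rw [hσim b hb]
        by_cases hp : x = b
        · subst hp; simp [h1, hBnotim _ hb]
        · simp [h1, hp]
      · rw [hσelse y h1 h2]
        by_cases hp : x = y
        · subst hp; simp [h1, h2]
        · simp [h1, hp]


lemma opt_exists : ∀ o1 o2 : Option (Fin 3), ∃ c : Fin 3, some c ≠ o1 ∧ some c ≠ o2 := by decide

noncomputable def pick (o1 o2 : Option (Fin 3)) : Fin 3 := Classical.choose (opt_exists o1 o2)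

lemma pick_spec (o1 o2 : Option (Fin 3)) : some (pick o1 o2) ≠ o1 ∧ some (pick o1 o2) ≠ o2 :=
  Classical.choose_spec (opt_exists o1 o2)


noncomputable def col (φ ψ : X → X) : X → Fin 3 :=
  (IsWellFounded.wf (r := WellOrderingRel (α := X))).fix fun x ih =>
    pick (if h : WellOrderingRel (φ x) x then some (ih _ h) else none)
         (if h : WellOrderingRel (ψ x) x then some (ih _ h) else none)

lemma col_spec (φ ψ : X → X) (x : X) :
    (WellOrderingRel (φ x) x → col φ ψ x ≠ col φ ψ (φ x)) ∧
    (WellOrderingRel (ψ x) x → col φ ψ x ≠ col φ ψ (ψ x)) := by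
  have h : col φ ψ x =
      pick (if h : WellOrderingRel (φ x) x then some (col φ ψ (φ x)) else none)
           (if h : WellOrderingRel (ψ x) x then some (col φ ψ (ψ x)) else none) :=
    (IsWellFounded.wf (r := WellOrderingRel (α := X))).fix_eq _ x
  constructor
  · intro hr hc
    have := (pick_spec (if h : WellOrderingRel (φ x) x then some (col φ ψ (φ x)) else none)
      (if h : WellOrderingRel (ψ x) x then some (col φ ψ (ψ x)) else none)).1
    rw [← h, dif_pos hr, hc] at this
    exact this rfl
  · intro hr hc
    have := (pick_spec (if h : WellOrderingRel (φ x) x then some (col φ ψ (φ x)) else none)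
      (if h : WellOrderingRel (ψ x) x then some (col φ ψ (ψ x)) else none)).2
    rw [← h, dif_pos hr, hc] at this
    exact this rfl


lemma edge_col (φ : X → X) (A : Set X) (hinj : Set.InjOn φ A) {b : X} (hb : b ∈ A)
    (hfb : φ b ∈ A) (hne : φ b ≠ b) :
    col φ (Function.invFunOn φ A) b ≠ col φ (Function.invFunOn φ A) (φ b) := by
  set ψ := Function.invFunOn φ A with hψ
  rcases trichotomous_of WellOrderingRel (φ b) b with h | h | h
  · exact (col_spec φ ψ b).1 h
  · exact absurd h hne
  · have h2 := (col_spec φ ψ (φ b)).2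
    rw [show ψ (φ b) = b from hinj.leftInvOn_invFunOn hb] at h2
    exact (h2 h).symm

lemma part1 (A : Set X) (φ : X → X) (hinj : Set.InjOn φ A) (D : ℝ)
    (hD : ∀ a ∈ A, dist a (φ a) ≤ D) :
    (fun x y => if y ∈ A ∧ x = φ y then (1 : ℂ) else 0) ∈
      Submodule.span ℂ (DiagFullTrans X) := by
  classical
  set ψ := Function.invFunOn φ A with hψ
  set c := col φ ψ with hc
  set F : Set X := {a ∈ A | φ a = a} with hF
  set B : Fin 3 → Set X := fun i => {a ∈ A | φ a ≠ a ∧ c a = i} with hBdef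
  have hBsub : ∀ i, B i ⊆ A := fun i a ha => ha.1
  have hdisjB : ∀ i, ∀ b ∈ B i, φ b ∉ B i := by
    rintro i b ⟨hbA, hbne, hbc⟩ ⟨hfA, hfne, hfc⟩
    exact edge_col φ A hinj hbA hfA hbne (hbc.trans hfc.symm)
  have hA : A = F ∪ (B 0 ∪ (B 1 ∪ B 2)) := by
    ext a
    constructor
    · intro ha
      by_cases hfix : φ a = a
      · exact Or.inl ⟨ha, hfix⟩
      · have h3 : c a = 0 ∨ c a = 1 ∨ c a = 2 := by
          rcases (by decide : ∀ u : Fin 3, u = 0 ∨ u = 1 ∨ u = 2) (c a) with h | h | h <;>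
            simp [h]
        rcases h3 with h | h | h
        · exact Or.inr (Or.inl ⟨ha, hfix, h⟩)
        · exact Or.inr (Or.inr (Or.inl ⟨ha, hfix, h⟩))
        · exact Or.inr (Or.inr (Or.inr ⟨ha, hfix, h⟩))
    · rintro (h | h | h | h)
      · exact h.1
      · exact h.1
      · exact h.1
      · exact h.1
  have hker : ker φ A = ker φ F + (ker φ (B 0) + (ker φ (B 1) + ker φ (B 2))) := by
    rw [hA, ker_union φ ?h1, ker_union φ ?h2, ker_union φ ?h3]
    case h1 =>
      rintro a ⟨-, hfix⟩ (h | h | h)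
      · exact h.2.1 hfix
      · exact h.2.1 hfix
      · exact h.2.1 hfix
    case h2 =>
      rintro a ⟨-, -, h0⟩ (h | h)
      · exact absurd (h0.symm.trans h.2.2) (by decide)
      · exact absurd (h0.symm.trans h.2.2) (by decide)
    case h3 =>
      rintro a ⟨-, -, h1⟩ h2
      exact absurd (h1.symm.trans h2.2.2) (by decide)
  show ker φ A ∈ Submodule.span ℂ (DiagFullTrans X)
  rw [hker]
  have hfixmem := Submodule.subset_span (R := ℂ)
    (fixed_piece φ F (fun b hb => hb.2))
  have hmem : ∀ i, ker φ (B i) ∈ Submodule.span ℂ (DiagFullTrans X) := fun i =>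
    Submodule.subset_span (disj_piece φ A (B i) (hBsub i) hinj (hdisjB i) D hD)
  exact add_mem hfixmem (add_mem (hmem 0) (add_mem (hmem 1) (hmem 2)))


/-- RoeSet as a submodule -/
noncomputable def RoeSub (X : Type*) [MetricSpace X] : Submodule ℂ (X → X → ℂ) where
  carrier := RoeSet X
  zero_mem' := ⟨⟨0, fun x y => by simp⟩, 0, fun x y h => absurd rfl h⟩
  add_mem' := by
    rintro a b ⟨⟨C1, hC1⟩, R1, hR1⟩ ⟨⟨C2, hC2⟩, R2, hR2⟩
    refine ⟨⟨C1 + C2, fun x y => ?_⟩, max R1 R2, fun x y h => ?_⟩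
    · exact le_trans (norm_add_le _ _) (add_le_add (hC1 x y) (hC2 x y))
    · by_cases h1 : a x y = 0
      · have h2 : b x y ≠ 0 := fun hb => h (by simp only [Pi.add_apply, h1, hb, add_zero])
        exact le_trans (hR2 x y h2) (le_max_right _ _)
      · exact le_trans (hR1 x y h1) (le_max_left _ _)
  smul_mem' := by
    rintro t a ⟨⟨C, hC⟩, R, hR⟩
    refine ⟨⟨‖t‖ * max C 0, fun x y => ?_⟩, R, fun x y h => ?_⟩
    · simp only [Pi.smul_apply, smul_eq_mul, norm_mul]
      exact mul_le_mul_of_nonneg_left (le_trans (hC x y) (le_max_left _ _)) (norm_nonneg t)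
    · refine hR x y fun h0 => h ?_
      simp only [Pi.smul_apply, smul_eq_mul, h0, mul_zero]

lemma diag_sub_roe : DiagFullTrans X ⊆ RoeSet X := by
  rintro k ⟨f, φ, ⟨C, hC⟩, ⟨D, hD⟩, rfl⟩
  refine ⟨⟨max C 0, fun x y => ?_⟩, D, fun x y h => ?_⟩
  · beta_reduce
    by_cases hp : x = φ y
    · rw [if_pos hp, mul_one]
      exact le_trans (hC _) (le_max_left _ _)
    · rw [if_neg hp, mul_zero, norm_zero]
      exact le_max_right _ _
  · beta_reduce at h
    by_cases hp : x = φ y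
    · rw [hp]; exact hD y
    · rw [if_neg hp, mul_zero] at h
      exact absurd rfl h

lemma span_sub_roe : ∀ k ∈ Submodule.span ℂ (DiagFullTrans X), k ∈ RoeSet X := by
  have h : Submodule.span ℂ (DiagFullTrans X) ≤ RoeSub X :=
    Submodule.span_le.mpr diag_sub_roe
  exact fun k hk => h hk

/-- index of a point in a finite set w.r.t. the well-ordering -/
noncomputable def idx (T : Set X) (x : X) : ℕ :=
  (T ∩ {z | WellOrderingRel z x}).ncard

lemma idx_lt_aux {T : Set X} (hT : T.Finite) {x x' : X} (hx : x ∈ T)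
    (hr : WellOrderingRel x x') : idx T x < idx T x' := by
  have hss : T ∩ {z | WellOrderingRel z x} ⊂ T ∩ {z | WellOrderingRel z x'} := by
    constructor
    · rintro z ⟨hzT, hz⟩
      exact ⟨hzT, trans_of WellOrderingRel hz hr⟩
    · intro hsub
      have hx' : x ∈ T ∩ {z | WellOrderingRel z x'} := ⟨hx, hr⟩
      have h2 : WellOrderingRel x x := (hsub hx').2
      exact absurd h2 (irrefl_of WellOrderingRel x)
  exact Set.ncard_lt_ncard hss (hT.inter_of_left _)

lemma idx_inj {T : Set X} (hT : T.Finite) {x x' : X} (hx : x ∈ T) (hx' : x' ∈ T)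
    (h : idx T x = idx T x') : x = x' := by
  rcases trichotomous_of WellOrderingRel x x' with hr | hr | hr
  · exact absurd h (Nat.ne_of_lt (idx_lt_aux hT hx hr))
  · exact hr
  · exact absurd h.symm (Nat.ne_of_lt (idx_lt_aux hT hx' hr))

lemma idx_lt {T : Set X} (hT : T.Finite) {n : ℕ} (hn : T.ncard ≤ n) {x : X} (hx : x ∈ T) :
    idx T x < n := by
  refine lt_of_lt_of_le ?_ hn
  apply Set.ncard_lt_ncard ?_ hT
  constructor
  · exact Set.inter_subset_left
  · intro hsub
    have h2 : WellOrderingRel x x := (hsub hx).2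
    exact absurd h2 (irrefl_of WellOrderingRel x)

/-- multiplying by a bounded diagonal preserves the span -/
lemma diag_mul_span (g : X → ℂ) (Cg : ℝ) (hg : ∀ x, ‖g x‖ ≤ Cg) (k : X → X → ℂ)
    (hk : k ∈ Submodule.span ℂ (DiagFullTrans X)) :
    (fun x y => g x * k x y) ∈ Submodule.span ℂ (DiagFullTrans X) := by
  set L : (X → X → ℂ) →ₗ[ℂ] (X → X → ℂ) :=
    { toFun := fun a => fun x y => g x * a x y
      map_add' := by intro a b; funext x y; simp [mul_add]
      map_smul' := by intro t a; funext x y; simp; ring } with hL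
  have h1 : (fun x y => g x * k x y) = L k := rfl
  rw [h1]
  have h2 : L k ∈ Submodule.map L (Submodule.span ℂ (DiagFullTrans X)) :=
    Submodule.mem_map_of_mem hk
  rw [Submodule.map_span] at h2
  refine Submodule.span_le.mpr ?_ h2
  rintro - ⟨-, ⟨f, φ, ⟨C, hC⟩, hDD, rfl⟩, rfl⟩
  refine Submodule.subset_span ⟨fun x => g x * f x, φ, ⟨max Cg 0 * max C 0, fun x => ?_⟩, hDD, ?_⟩
  · rw [norm_mul]
    exact mul_le_mul (le_trans (hg x) (le_max_left _ _)) (le_trans (hC x) (le_max_left _ _))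
      (norm_nonneg _) (le_max_right _ _)
  · funext x y; show g x * (f x * _) = (g x * f x) * _; ring


lemma ker_apply (φ : X → X) (S : Set X) (x y : X) :
    ker φ S x y = if y ∈ S ∧ x = φ y then (1 : ℂ) else 0 := rfl

lemma part2 (hX : IsULF X) (a : X → X → ℂ) (ha : a ∈ RoeSet X) :
    a ∈ Submodule.span ℂ (DiagFullTrans X) := by
  obtain ⟨⟨C, hC⟩, R, hR⟩ := ha
  set R' := max R 1 with hR'
  obtain ⟨N, hN⟩ := hX R' (lt_of_lt_of_le one_pos (le_max_right R 1))
  set T : X → Set X := fun y => {x | a x y ≠ 0} with hT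
  set S : X → Set X := fun x => {y | a x y ≠ 0} with hS
  have hTsub : ∀ y, T y ⊆ {z | dist y z ≤ R'} := fun y x hx => by
    simp only [Set.mem_setOf_eq]
    rw [dist_comm]
    exact le_trans (hR x y hx) (le_max_left _ _)
  have hTfin : ∀ y, (T y).Finite := fun y => ((hN y).1).subset (hTsub y)
  have hTcard : ∀ y, (T y).ncard ≤ N := fun y =>
    le_trans (Set.ncard_le_ncard (hTsub y) (hN y).1) (hN y).2
  have hSsub : ∀ x, S x ⊆ {z | dist x z ≤ R'} := fun x y hy => by
    simp only [Set.mem_setOf_eq]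
    exact le_trans (hR x y hy) (le_max_left _ _)
  have hSfin : ∀ x, (S x).Finite := fun x => ((hN x).1).subset (hSsub x)
  have hScard : ∀ x, (S x).ncard ≤ N := fun x =>
    le_trans (Set.ncard_le_ncard (hSsub x) (hN x).1) (hN x).2
  set P : ℕ → ℕ → X → X → Prop := fun i j x y =>
    a x y ≠ 0 ∧ idx (T y) x = i ∧ idx (S x) y = j with hP
  have uniqX : ∀ i j x x' y, P i j x y → P i j x' y → x = x' := by
    intro i j x x' y h1 h2
    exact idx_inj (hTfin y) h1.1 h2.1 (h1.2.1.trans h2.2.1.symm)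
  have uniqY : ∀ i j x y y', P i j x y → P i j x y' → y = y' := by
    intro i j x y y' h1 h2
    exact idx_inj (hSfin x) h1.1 h2.1 (h1.2.2.trans h2.2.2.symm)
  have hpiece : ∀ i j, (fun x y => if P i j x y then a x y else 0) ∈
      Submodule.span ℂ (DiagFullTrans X) := by
    intro i j
    set Ac : Set X := {y | ∃ x, P i j x y} with hAc
    set φc : X → X := fun y => if h : ∃ x, P i j x y then h.choose else y with hφc
    have hφP : ∀ y ∈ Ac, P i j (φc y) y := by
      intro y hy
      have hy' : ∃ x, P i j x y := hy
      have h1 : φc y = hy'.choose := dif_pos hy'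
      rw [h1]
      exact hy'.choose_spec
    have hinjc : Set.InjOn φc Ac := by
      intro y1 h1 y2 h2 he
      exact uniqY i j (φc y1) y1 y2 (hφP y1 h1) (he ▸ hφP y2 h2)
    have hDc : ∀ b ∈ Ac, dist b (φc b) ≤ R' := by
      intro b hb
      have h1 := (hφP b hb).1
      rw [dist_comm]
      exact le_trans (hR _ _ h1) (le_max_left _ _)
    have ht := part1 Ac φc hinjc R' hDc
    set g : X → ℂ := fun x => if h : ∃ y, P i j x y then a x h.choose else 0 with hg
    have hgb : ∀ x, ‖g x‖ ≤ max C 0 := by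
      intro x
      by_cases h : ∃ y, P i j x y
      · have h1 : g x = a x h.choose := dif_pos h
        rw [h1]
        exact le_trans (hC _ _) (le_max_left _ _)
      · have h1 : g x = 0 := dif_neg h
        rw [h1, norm_zero]
        exact le_max_right _ _
    have key : (fun x y => if P i j x y then a x y else 0)
        = fun x y => g x * ker φc Ac x y := by
      funext x y
      by_cases hPxy : P i j x y
      · rw [if_pos hPxy]
        have hyA : y ∈ Ac := ⟨x, hPxy⟩
        have hxφ : φc y = x := uniqX i j (φc y) x y (hφP y hyA) hPxy
        have hker1 : ker φc Ac x y = 1 := by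
          rw [ker_apply, if_pos ⟨hyA, hxφ.symm⟩]
        have h' : ∃ y', P i j x y' := ⟨y, hPxy⟩
        have hgx : g x = a x h'.choose := dif_pos h'
        have hcy : h'.choose = y := uniqY i j x h'.choose y h'.choose_spec hPxy
        rw [hker1, hgx, hcy, mul_one]
      · rw [if_neg hPxy]
        have hker0 : ker φc Ac x y = 0 := by
          rw [ker_apply, if_neg]
          rintro ⟨hyA, hxe⟩
          exact hPxy (hxe ▸ hφP y hyA)
        rw [hker0, mul_zero]
    rw [key]
    exact diag_mul_span g (max C 0) hgb _ ht
  have hsum : a = ∑ p ∈ Finset.range N ×ˢ Finset.range N,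
      (fun x y => if P p.1 p.2 x y then a x y else 0) := by
    funext x y
    rw [Finset.sum_apply, Finset.sum_apply]
    by_cases h0 : a x y = 0
    · have hz : ∀ p ∈ Finset.range N ×ˢ Finset.range N,
          (if P p.1 p.2 x y then a x y else 0) = 0 :=
        fun p _ => if_neg (fun hp => hp.1 h0)
      rw [Finset.sum_eq_zero hz, h0]
    · have hxT : x ∈ T y := h0
      have hyS : y ∈ S x := h0
      have hmem : (idx (T y) x, idx (S x) y) ∈ Finset.range N ×ˢ Finset.range N := by
        rw [Finset.mem_product, Finset.mem_range, Finset.mem_range]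
        exact ⟨idx_lt (hTfin y) (hTcard y) hxT, idx_lt (hSfin x) (hScard x) hyS⟩
      rw [Finset.sum_eq_single_of_mem _ hmem]
      · exact (if_pos ⟨h0, rfl, rfl⟩).symm
      · intro p _ hne
        rw [if_neg]
        rintro ⟨-, hi, hj⟩
        exact hne (Prod.ext_iff.mpr ⟨hi.symm, hj.symm⟩)
  rw [hsum]
  exact Submodule.sum_mem _ fun p _ => hpiece p.1 p.2


end Stmt2Aux

/-- For a uniformly locally finite metric space `X`, every partial translation in
`ℂ_u[X]` is a linear combination of products of bounded diagonal operators and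
full translations; consequently `ℂ_u[X] = span(ℓ∞(X) · Γ_X)`. -/
theorem stmt2 {X : Type*} [MetricSpace X] (hX : IsULF X) :
    (∀ (A : Set X) (φ : X → X), Set.InjOn φ A →
        (∃ D : ℝ, ∀ a ∈ A, dist a (φ a) ≤ D) →
        (fun x y => if y ∈ A ∧ x = φ y then (1 : ℂ) else 0) ∈
          Submodule.span ℂ (DiagFullTrans X)) ∧
    (∀ a : X → X → ℂ, a ∈ RoeSet X ↔ a ∈ Submodule.span ℂ (DiagFullTrans X)) := by
  rcases isEmpty_or_nonempty X with hE | hNE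
  · constructor
    · intro A φ _ _
      have h0 : (fun x y => if y ∈ A ∧ x = φ y then (1 : ℂ) else 0) = 0 := by
        funext x
        exact hE.elim x
      rw [h0]
      exact Submodule.zero_mem _
    · intro a
      have h0 : a = 0 := by funext x; exact hE.elim x
      subst h0
      exact ⟨fun _ => Submodule.zero_mem _,
        fun _ => ⟨⟨0, fun x => hE.elim x⟩, 0, fun x => hE.elim x⟩⟩
  · constructor
    · rintro A φ hinj ⟨D, hD⟩
      exact Stmt2Aux.part1 A φ hinj D hD
    · intro a
      exact ⟨Stmt2Aux.part2 hX a, fun h => Stmt2Aux.span_sub_roe a h⟩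
end

section
/- Let G₁ and G₂ be non-amenable groups, let π be a unitary representation of G₁ × G₂ on a Hilbert space H that is weakly contained in the regular representation, and let b : G₁ × G₂ → H be a 1-cocycle (b(gh) = b(g) + π(g)b(h)). Then b is bounded, and hence is a 1-coboundary (there is v ∈ H with b(g) = π(g)v − v). In particular H¹(G₁ × G₂, H) = 0 for every weakly regular unitary representation H. -/
open scoped BigOperators

noncomputable section

/-- The submodule of bounded complex-valued functions on `G` (ℓ∞(G)). -/
def bddSubmodule (G : Type*) : Submodule ℂ (G → ℂ) where
  carrier := {f | ∃ C : ℝ, ∀ x, ‖f x‖ ≤ C}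
  add_mem' := by
    rintro f g ⟨C, hC⟩ ⟨D, hD⟩
    exact ⟨C + D, fun x => (norm_add_le _ _).trans (add_le_add (hC x) (hD x))⟩
  zero_mem' := ⟨0, fun x => by simp⟩
  smul_mem' := by
    rintro c f ⟨C, hC⟩
    exact ⟨‖c‖ * C, fun x => by
      simpa [norm_smul] using
        mul_le_mul_of_nonneg_left (hC x) (norm_nonneg c)⟩

/-- `conj f * g` as an element of ℓ∞(G). -/
def conjMulElem {G : Type*} (f g : ↥(bddSubmodule G)) : ↥(bddSubmodule G) :=
  ⟨fun x => (starRingEnd ℂ) ((f : G → ℂ) x) * (g : G → ℂ) x, by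
    obtain ⟨C, hC⟩ := f.2
    obtain ⟨D, hD⟩ := g.2
    refine ⟨C * D, fun x => ?_⟩
    rw [norm_mul, RCLike.norm_conj]
    exact mul_le_mul (hC x) (hD x) (norm_nonneg _)
      ((norm_nonneg _).trans (hC x))⟩

/-- Amenability of `G`: existence of a left-invariant mean on ℓ∞(G). -/
def HasInvariantMean (G : Type*) [Group G] : Prop :=
  ∃ Ψ : ↥(bddSubmodule G) →ₗ[ℂ] ℂ,
    (∀ f : ↥(bddSubmodule G), (∀ x, (f : G → ℂ) x = 1) → Ψ f = 1) ∧
    (∀ f : ↥(bddSubmodule G),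
        0 ≤ (Ψ (conjMulElem f f)).re ∧ (Ψ (conjMulElem f f)).im = 0) ∧
    (∀ (f f' : ↥(bddSubmodule G)) (g : G),
        (∀ x, (f' : G → ℂ) x = (f : G → ℂ) (g⁻¹ * x)) → Ψ f' = Ψ f)

/-- A unitary representation `π` of `G` is weakly regular (weakly contained in
the left regular representation on `ℓ²(G)`) if its matrix coefficients are
limits, uniformly on finite subsets, of finite sums of matrix coefficients of
the regular representation. -/
def WeaklyRegular {G H : Type*} [Group G] [NormedAddCommGroup H]
    [InnerProductSpace ℂ H] (π : G →* (H ≃ₗᵢ[ℂ] H)) : Prop :=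
  ∀ (v : H) (F : Finset G) (ε : ℝ), 0 < ε →
    ∃ (n : ℕ) (ξ : Fin n → (G → ℂ)),
      (∀ i, Summable fun x => ‖ξ i x‖ ^ 2) ∧
      ∀ g ∈ F,
        ‖(inner ℂ (π g v) v : ℂ) -
            ∑ i, ∑' x : G, ξ i (g⁻¹ * x) * (starRingEnd ℂ) (ξ i x)‖ < ε

lemma summable_mul_of_sq {α : Type*} {f g : α → ℝ}
    (hf : Summable fun a => f a ^ 2) (hg : Summable fun a => g a ^ 2) :
    Summable fun a => f a * g a := by
  refine Summable.of_abs (Summable.of_nonneg_of_le (fun a => abs_nonneg _)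
    (fun a => ?_) ((hf.add hg).div_const 2))
  rw [abs_mul]
  nlinarith [sq_nonneg (|f a| - |g a|), sq_abs (f a), sq_abs (g a)]

lemma tsum_mul_le_sqrt {α : Type*} {f g : α → ℝ}
    (hf0 : ∀ a, 0 ≤ f a) (hg0 : ∀ a, 0 ≤ g a)
    (hf : Summable fun a => f a ^ 2) (hg : Summable fun a => g a ^ 2) :
    ∑' a, f a * g a ≤ Real.sqrt (∑' a, f a ^ 2) * Real.sqrt (∑' a, g a ^ 2) := by
  refine Summable.tsum_le_of_sum_le (summable_mul_of_sq hf hg) (fun s => ?_)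
  have h1 : (∑ a ∈ s, f a * g a) ^ 2 ≤ (∑ a ∈ s, f a ^ 2) * ∑ a ∈ s, g a ^ 2 :=
    Finset.sum_mul_sq_le_sq_mul_sq s f g
  have h2 : (∑ a ∈ s, f a ^ 2) ≤ ∑' a, f a ^ 2 :=
    Summable.sum_le_tsum s (fun a _ => sq_nonneg _) hf
  have h3 : (∑ a ∈ s, g a ^ 2) ≤ ∑' a, g a ^ 2 :=
    Summable.sum_le_tsum s (fun a _ => sq_nonneg _) hg
  have hs0 : 0 ≤ ∑ a ∈ s, f a * g a :=
    Finset.sum_nonneg fun a _ => mul_nonneg (hf0 a) (hg0 a)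
  have h4 : (∑ a ∈ s, f a * g a) ^ 2 ≤ (∑' a, f a ^ 2) * ∑' a, g a ^ 2 := by
    refine h1.trans (mul_le_mul h2 h3 (Finset.sum_nonneg fun a _ => sq_nonneg _)
      (tsum_nonneg fun a => sq_nonneg _))
  calc ∑ a ∈ s, f a * g a = Real.sqrt ((∑ a ∈ s, f a * g a) ^ 2) := (Real.sqrt_sq hs0).symm
    _ ≤ Real.sqrt ((∑' a, f a ^ 2) * ∑' a, g a ^ 2) := Real.sqrt_le_sqrt h4
    _ = _ := Real.sqrt_mul (tsum_nonneg fun a => sq_nonneg _) _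

lemma bounded_cocycle_coboundary {G H : Type*} [Group G] [NormedAddCommGroup H]
    [InnerProductSpace ℂ H] [CompleteSpace H]
    (π : G →* (H ≃ₗᵢ[ℂ] H)) (b : G → H)
    (hb : ∀ g h : G, b (g * h) = b g + π g (b h))
    (hbdd : ∃ C : ℝ, ∀ g : G, ‖b g‖ ≤ C) :
    ∃ v : H, ∀ g : G, b g = π g v - v := by
  obtain ⟨C, hC⟩ := hbdd
  set r : H → ℝ := fun x => ⨆ g : G, ‖x - b g‖ with hr
  have hbdda : ∀ x : H, BddAbove (Set.range fun g : G => ‖x - b g‖) := by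
    intro x
    refine ⟨‖x‖ + C, ?_⟩
    rintro _ ⟨g, rfl⟩
    exact (norm_sub_le _ _).trans (add_le_add le_rfl (hC g))
  have hrge : ∀ (x : H) (g : G), ‖x - b g‖ ≤ r x := fun x g => le_ciSup (hbdda x) g
  have hr0 : ∀ x, 0 ≤ r x := fun x => (norm_nonneg _).trans (hrge x 1)
  have hrbelow : BddBelow (Set.range r) := ⟨0, by rintro _ ⟨x, rfl⟩; exact hr0 x⟩
  set R : ℝ := ⨅ x : H, r x with hR
  have hR0 : 0 ≤ R := le_ciInf hr0
  have hRle : ∀ x, R ≤ r x := fun x => ciInf_le hrbelow x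
  -- key parallelogram estimate
  have key : ∀ x y : H, ‖x - y‖ ^ 2 + 4 * R ^ 2 ≤ 2 * r x ^ 2 + 2 * r y ^ 2 := by
    intro x y
    set t : ℝ := 2 * r x ^ 2 + 2 * r y ^ 2 - ‖x - y‖ ^ 2 with ht
    have hpar : ∀ g : G, 4 * ‖(2:ℝ)⁻¹ • (x + y) - b g‖ ^ 2 ≤ t := by
      intro g
      have := parallelogram_law_with_norm ℂ (x - b g) (y - b g)
      have hid : (x - b g) + (y - b g) = (2:ℝ) • ((2:ℝ)⁻¹ • (x + y) - b g) := by
        rw [smul_sub, smul_inv_smul₀ (by norm_num : (2:ℝ) ≠ 0)]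
        module
      have hid2 : (x - b g) - (y - b g) = x - y := by abel
      rw [hid, hid2, norm_smul] at this
      have h1 : ‖x - b g‖ ≤ r x := hrge x g
      have h2 : ‖y - b g‖ ≤ r y := hrge y g
      have n1 : (0:ℝ) ≤ ‖x - b g‖ := norm_nonneg _
      have n2 : (0:ℝ) ≤ ‖y - b g‖ := norm_nonneg _
      simp only [Real.norm_ofNat] at this
      nlinarith [norm_nonneg ((2:ℝ)⁻¹ • (x + y) - b g), hr0 x, hr0 y]
    have ht0 : 0 ≤ t :=
      le_trans (by positivity) (hpar 1)
    have hrmid : r ((2:ℝ)⁻¹ • (x + y)) ≤ Real.sqrt (t / 4) := by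
      refine ciSup_le fun g => ?_
      have := hpar g
      rw [show t = (Real.sqrt (t/4))^2 * 4 by rw [Real.sq_sqrt (by linarith)]; ring] at this
      nlinarith [Real.sqrt_nonneg (t/4), norm_nonneg ((2:ℝ)⁻¹ • (x + y) - b g)]
    have : R ≤ Real.sqrt (t / 4) := (hRle _).trans hrmid
    have hR2 : R ^ 2 ≤ t / 4 := by
      have := Real.sq_sqrt (show (0:ℝ) ≤ t/4 by linarith)
      nlinarith [Real.sqrt_nonneg (t/4)]
    linarith
  -- minimizing sequence
  have hex : ∀ n : ℕ, ∃ x : H, r x < R + 1 / (n + 1) := by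
    intro n
    have : R < R + 1 / (n + 1) := by
      have : (0:ℝ) < 1 / (n+1) := by positivity
      linarith
    obtain ⟨x, hx⟩ := exists_lt_of_ciInf_lt this
    exact ⟨x, hx⟩
  choose x hx using hex
  have hcau : CauchySeq x := by
    refine cauchySeq_of_le_tendsto_0
      (fun N => Real.sqrt (8 * R * (1 / (N+1)) + 4 * (1 / (N+1))^2)) (fun n m N hn hm => ?_) ?_
    · have h1 : r (x n) < R + 1/(n+1) := hx n
      have h2 : r (x m) < R + 1/(m+1) := hx m
      have hmono : ∀ k l : ℕ, l ≤ k → (1:ℝ)/(k+1) ≤ 1/(l+1) := by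
        intro k l hlk
        have : (l:ℝ) ≤ k := Nat.cast_le.mpr hlk
        gcongr
      have hn' := hmono n N hn
      have hm' := hmono m N hm
      have hk := key (x n) (x m)
      rw [dist_eq_norm]
      have hnn : (0:ℝ) ≤ 1/(N+1) := by positivity
      have hsq : ‖x n - x m‖^2 ≤ 8 * R * (1/(N+1)) + 4 * (1/(N+1))^2 := by
        nlinarith [hr0 (x n), hr0 (x m), sq_nonneg (1/((n:ℝ)+1)), sq_nonneg (1/((m:ℝ)+1))]
      calc ‖x n - x m‖ = Real.sqrt (‖x n - x m‖^2) := (Real.sqrt_sq (norm_nonneg _)).symm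
        _ ≤ _ := Real.sqrt_le_sqrt hsq
    · have h0 : Filter.Tendsto (fun N : ℕ => (1:ℝ)/(N+1)) Filter.atTop (nhds 0) :=
        tendsto_one_div_add_atTop_nhds_zero_nat
      have : Filter.Tendsto (fun N : ℕ => 8 * R * (1/(N+1)) + 4 * (1/(N+1))^2)
          Filter.atTop (nhds (8 * R * 0 + 4 * 0^2)) := by
        exact ((h0.const_mul _).add ((h0.pow 2).const_mul _))
      simp only [mul_zero, zero_pow, ne_eq, OfNat.ofNat_ne_zero, not_false_iff, add_zero] at this
      have := (Real.continuous_sqrt.tendsto 0).comp (by simpa using this)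
      simpa [Function.comp_def] using this
  obtain ⟨v, hv⟩ := cauchySeq_tendsto_of_complete hcau
  -- r is 1-Lipschitz
  have hlip : ∀ x y : H, r x ≤ r y + ‖x - y‖ := by
    intro x' y'
    refine ciSup_le fun g => ?_
    have : ‖x' - b g‖ ≤ ‖y' - b g‖ + ‖x' - y'‖ := by
      have := norm_add_le (y' - b g) (x' - y')
      have heq : (y' - b g) + (x' - y') = x' - b g := by abel
      rw [heq] at this; linarith
    exact this.trans (by linarith [hrge y' g])
  have hrv : r v = R := by
    refine le_antisymm ?_ (hRle v)
    refine le_of_forall_pos_le_add fun ε hε => ?_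
    have h1 : Filter.Tendsto (fun n => ‖v - x n‖) Filter.atTop (nhds 0) := by
      have := hv.sub_const v
      have h2 : Filter.Tendsto (fun n => x n - v) Filter.atTop (nhds 0) := by simpa using this
      have := h2.norm
      simp only [norm_zero] at this
      simpa [norm_sub_rev] using this
    have h2 : Filter.Tendsto (fun n : ℕ => (1:ℝ)/(n+1)) Filter.atTop (nhds 0) :=
      tendsto_one_div_add_atTop_nhds_zero_nat
    have := (h1.add h2)
    rw [add_zero] at this
    have hev : ∀ᶠ n in Filter.atTop, ‖v - x n‖ + 1/(n+1) < ε :=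
      this.eventually (eventually_lt_nhds hε)
    obtain ⟨n, hn⟩ := hev.exists
    have := hlip v (x n)
    have := hx n
    linarith
  refine ⟨-v, fun g => ?_⟩
  -- equivariance
  have hweq : r (π g v + b g) = R := by
    have hbh : ∀ h : G, b h = b g + π g (b (g⁻¹ * h)) := by
      intro h
      have := hb g (g⁻¹ * h)
      rwa [mul_inv_cancel_left] at this
    have hfun : ∀ h : G, ‖(π g v + b g) - b h‖ = ‖v - b (g⁻¹ * h)‖ := by
      intro h
      rw [hbh h]
      have : (π g v + b g) - (b g + π g (b (g⁻¹ * h))) = π g v - π g (b (g⁻¹ * h)) := by abel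
      rw [this, ← LinearIsometryEquiv.map_sub, LinearIsometryEquiv.norm_map]
    have : r (π g v + b g) = ⨆ h : G, ‖v - b (g⁻¹ * h)‖ := by
      unfold r
      exact iSup_congr hfun
    rw [this, ← hrv]
    unfold r
    exact (Equiv.mulLeft g⁻¹).surjective.iSup_congr _ (fun h => rfl)
  have := key (π g v + b g) v
  rw [hweq, hrv] at this
  have : ‖(π g v + b g) - v‖ ^ 2 ≤ 0 := by nlinarith
  have h0 : (π g v + b g) - v = 0 := by
    have := sq_nonneg ‖(π g v + b g) - v‖
    have hn : ‖(π g v + b g) - v‖ = 0 := by nlinarith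
    exact norm_eq_zero.mp hn
  have hbg : b g = v - π g v := by
    have h1 : (π g) v + b g = v := by
      have := sub_eq_zero.mp h0
      linear_combination (norm := abel) this
    linear_combination (norm := abel) h1
  rw [map_neg, hbg]
  abel

lemma mean_of_almost_invariant {G : Type*} [Group G]
    (η : Finset G × ℕ → G → ℝ)
    (h0 : ∀ i x, 0 ≤ η i x)
    (hsum : ∀ i, Summable fun x => η i x ^ 2)
    (hN : ∀ i : Finset G × ℕ, |(∑' x, η i x ^ 2) - 1| ≤ 5 / (i.2 + 1))
    (hinv : ∀ i : Finset G × ℕ, ∀ s ∈ i.1,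
      (∑' x, (η i (s⁻¹ * x) - η i x) ^ 2) ≤ 5 / (i.2 + 1)) :
    HasInvariantMean G := by
  classical
  set 𝓕 : Filter (Finset G × ℕ) := Filter.atTop ×ˢ Filter.atTop with h𝓕
  haveI : 𝓕.NeBot := by rw [h𝓕]; infer_instance
  set U : Ultrafilter (Finset G × ℕ) := Ultrafilter.of 𝓕 with hUdef
  have hU : ↑U ≤ 𝓕 := Ultrafilter.of_le 𝓕
  have hNle : ∀ i, (∑' x, η i x ^ 2) ≤ 6 := by
    intro i
    have h5 : (5:ℝ) / (i.2+1) ≤ 5 := by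
      rw [div_le_iff₀ (by positivity)]
      nlinarith [Nat.cast_nonneg (α := ℝ) i.2]
    have := (abs_le.mp (hN i)).2
    linarith
  have hCf : ∀ f : ↥(bddSubmodule G), ∃ C : ℝ, 0 ≤ C ∧ ∀ x, ‖(f : G → ℂ) x‖ ≤ C := by
    intro f; obtain ⟨C, hC⟩ := f.2
    exact ⟨C, (norm_nonneg _).trans (hC 1), hC⟩
  have hmsum : ∀ (i : Finset G × ℕ) (f : ↥(bddSubmodule G)),
      Summable fun x => (f : G → ℂ) x * ((η i x ^ 2 : ℝ) : ℂ) := by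
    intro i f
    obtain ⟨C, hC0, hC⟩ := hCf f
    refine Summable.of_norm_bounded ((hsum i).mul_left C) fun x => ?_
    rw [norm_mul, Complex.norm_real, Real.norm_eq_abs, abs_of_nonneg (sq_nonneg _)]
    exact mul_le_mul_of_nonneg_right (hC x) (sq_nonneg _)
  set m : (Finset G × ℕ) → ↥(bddSubmodule G) → ℂ :=
    fun i f => ∑' x, (f : G → ℂ) x * ((η i x ^ 2 : ℝ) : ℂ) with hm
  have hmdef : ∀ i (f : ↥(bddSubmodule G)),
      m i f = ∑' x, (f : G → ℂ) x * ((η i x ^ 2 : ℝ) : ℂ) := fun i f => rfl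
  have hmnormsum : ∀ i (f : ↥(bddSubmodule G)),
      Summable fun x => ‖(f : G → ℂ) x * ((η i x ^ 2 : ℝ) : ℂ)‖ := by
    intro i f
    obtain ⟨C, hC0, hC⟩ := hCf f
    refine Summable.of_nonneg_of_le (fun x => norm_nonneg _) (fun x => ?_) ((hsum i).mul_left C)
    rw [norm_mul, Complex.norm_real, Real.norm_eq_abs, abs_of_nonneg (sq_nonneg _)]
    exact mul_le_mul_of_nonneg_right (hC x) (sq_nonneg _)
  have key : ∀ u : (Finset G × ℕ) → ℂ, (∃ C, ∀ i, ‖u i‖ ≤ C) →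
      ∃ z, Filter.Tendsto u ↑U (nhds z) := by
    rintro u ⟨C, hC⟩
    have hcomp : IsCompact (Metric.closedBall (0:ℂ) C) := isCompact_closedBall _ _
    have hmem : ↑(U.map u) ≤ Filter.principal (Metric.closedBall (0:ℂ) C) := by
      rw [Filter.le_principal_iff]
      refine Filter.mem_map.mpr (Filter.univ_mem' ?_)
      intro i
      simpa [Metric.mem_closedBall, dist_eq_norm] using hC i
    obtain ⟨z, _, hz⟩ := hcomp.ultrafilter_le_nhds (U.map u) hmem
    rw [Ultrafilter.coe_map] at hz
    exact ⟨z, hz⟩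
  have hmb : ∀ f : ↥(bddSubmodule G), ∃ C, ∀ i, ‖m i f‖ ≤ C := by
    intro f
    obtain ⟨C, hC0, hC⟩ := hCf f
    refine ⟨C * 6, fun i => ?_⟩
    calc ‖m i f‖ ≤ ∑' x, ‖(f : G → ℂ) x * ((η i x ^ 2 : ℝ) : ℂ)‖ :=
          norm_tsum_le_tsum_norm (hmnormsum i f)
      _ ≤ ∑' x, C * (η i x ^ 2) := by
          refine Summable.tsum_le_tsum (fun x => ?_) (hmnormsum i f) ((hsum i).mul_left C)
          rw [norm_mul, Complex.norm_real, Real.norm_eq_abs, abs_of_nonneg (sq_nonneg _)]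
          exact mul_le_mul_of_nonneg_right (hC x) (sq_nonneg _)
      _ = C * ∑' x, η i x ^ 2 := tsum_mul_left
      _ ≤ C * 6 := mul_le_mul_of_nonneg_left (hNle i) hC0
  choose Ψ₀ hΨ using fun f => key (fun i => m i f) (hmb f)
  have hmadd : ∀ i (f g : ↥(bddSubmodule G)), m i (f + g) = m i f + m i g := by
    intro i f g
    rw [hm]
    simp only [Submodule.coe_add, Pi.add_apply, add_mul]
    exact Summable.tsum_add (hmsum i f) (hmsum i g)
  have hmsmul : ∀ i (c : ℂ) (f : ↥(bddSubmodule G)), m i (c • f) = c * m i f := by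
    intro i c f
    rw [hm]
    simp only [Submodule.coe_smul, Pi.smul_apply, smul_eq_mul, mul_assoc]
    exact tsum_mul_left
  have hΨadd : ∀ f g : ↥(bddSubmodule G), Ψ₀ (f + g) = Ψ₀ f + Ψ₀ g := by
    intro f g
    refine tendsto_nhds_unique (hΨ (f + g)) ?_
    have := (hΨ f).add (hΨ g)
    simpa only [← hmadd] using this
  have hΨsmul : ∀ (c : ℂ) (f : ↥(bddSubmodule G)), Ψ₀ (c • f) = c * Ψ₀ f := by
    intro c f
    refine tendsto_nhds_unique (hΨ (c • f)) ?_
    have := (hΨ f).const_mul c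
    simpa only [← hmsmul] using this
  refine ⟨{ toFun := Ψ₀, map_add' := hΨadd, map_smul' := hΨsmul }, ?_, ?_, ?_⟩
  · -- unital
    intro f hf1
    have hm1 : ∀ i, m i f = ((∑' x, η i x ^ 2 : ℝ) : ℂ) := by
      intro i
      rw [hm, Complex.ofReal_tsum]
      exact tsum_congr fun x => by rw [hf1 x, one_mul]
    have ht : Filter.Tendsto (fun i : Finset G × ℕ => (∑' x, η i x ^ 2)) 𝓕 (nhds 1) := by
      rw [Metric.tendsto_nhds]
      intro ε hε
      obtain ⟨n₀, hn₀⟩ := exists_nat_gt ((5:ℝ)/ε)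
      have hev : ∀ᶠ i : Finset G × ℕ in 𝓕, n₀ ≤ i.2 :=
        (Filter.eventually_ge_atTop n₀).prod_inr _
      filter_upwards [hev] with i hi
      rw [Real.dist_eq]
      have h1 : (5:ℝ)/(i.2+1) ≤ 5/(n₀+1) := by
        have : (n₀:ℝ) ≤ i.2 := Nat.cast_le.mpr hi
        gcongr
      have h2 : (5:ℝ)/(n₀+1) < ε := by
        rw [div_lt_iff₀ (by positivity)]
        rw [div_lt_iff₀ hε] at hn₀
        nlinarith
      exact lt_of_le_of_lt ((hN i).trans h1) h2
    have ht2 : Filter.Tendsto (fun i => m i f) ↑U (nhds 1) := by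
      have := (Complex.continuous_ofReal.tendsto 1).comp ht
      simp only [Function.comp_def, Complex.ofReal_one] at this
      exact (this.congr fun i => (hm1 i).symm).mono_left hU
    exact tendsto_nhds_unique (hΨ f) ht2
  · -- positivity
    intro f
    obtain ⟨C, hC0, hC⟩ := hCf f
    have hmemC : ∀ i, m i (conjMulElem f f) ∈ {z : ℂ | 0 ≤ z.re ∧ z.im = 0} := by
      intro i
      have hcoe : ∀ x, ((conjMulElem f f : ↥(bddSubmodule G)) : G → ℂ) x
          = (starRingEnd ℂ) ((f : G → ℂ) x) * (f : G → ℂ) x := fun x => rfl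
      have hterm : ∀ x, ((conjMulElem f f : ↥(bddSubmodule G)) : G → ℂ) x * ((η i x ^ 2 : ℝ) : ℂ)
          = ((‖(f : G → ℂ) x‖ ^ 2 * η i x ^ 2 : ℝ) : ℂ) := by
        intro x
        rw [hcoe x, RCLike.conj_mul]
        simp only [RCLike.ofReal_pow, Complex.coe_algebraMap]
        push_cast
        ring
      have hrsum : Summable fun x => ‖(f : G → ℂ) x‖ ^ 2 * η i x ^ 2 := by
        refine Summable.of_nonneg_of_le (fun x => by positivity) (fun x => ?_)
          ((hsum i).mul_left (C^2))
        exact mul_le_mul_of_nonneg_right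
          (pow_le_pow_left₀ (norm_nonneg _) (hC x) 2) (sq_nonneg _)
      have : m i (conjMulElem f f) = ((∑' x, ‖(f : G → ℂ) x‖ ^ 2 * η i x ^ 2 : ℝ) : ℂ) := by
        rw [hm, Complex.ofReal_tsum]
        exact tsum_congr hterm
      rw [this]
      constructor
      · rw [Complex.ofReal_re]
        exact tsum_nonneg fun x => by positivity
      · rw [Complex.ofReal_im]
    have hclosed : IsClosed {z : ℂ | 0 ≤ z.re ∧ z.im = 0} :=
      IsClosed.inter (isClosed_le continuous_const Complex.continuous_re)
        (isClosed_eq Complex.continuous_im continuous_const)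
    exact hclosed.mem_of_tendsto (hΨ (conjMulElem f f))
      (Filter.Eventually.of_forall hmemC)
  · -- invariance
    intro f f' g hff'
    obtain ⟨C, hC0, hC⟩ := hCf f
    have hsumg : ∀ i, Summable fun x => η i (g * x) ^ 2 := by
      intro i
      have := ((Equiv.mulLeft g).summable_iff (f := fun x => η i x ^ 2))
      simp only [Function.comp_def, Equiv.coe_mulLeft] at this
      exact this.mpr (hsum i)
    have htsumg : ∀ i, (∑' x, η i (g * x) ^ 2) = ∑' x, η i x ^ 2 := by
      intro i
      have := (Equiv.mulLeft g).tsum_eq (fun x => η i x ^ 2)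
      simpa only [Equiv.coe_mulLeft] using this
    have hsum1 : ∀ i, Summable fun x => (f : G → ℂ) x * ((η i (g * x) ^ 2 : ℝ) : ℂ) := by
      intro i
      refine Summable.of_norm_bounded ((hsumg i).mul_left C) fun x => ?_
      rw [norm_mul, Complex.norm_real, Real.norm_eq_abs, abs_of_nonneg (sq_nonneg _)]
      exact mul_le_mul_of_nonneg_right (hC x) (sq_nonneg _)
    have hre : ∀ i, m i f' = ∑' x, (f : G → ℂ) x * ((η i (g * x) ^ 2 : ℝ) : ℂ) := by
      intro i
      rw [hmdef i f']
      rw [← (Equiv.mulLeft g).tsum_eq fun x => (f' : G → ℂ) x * ((η i x ^ 2 : ℝ) : ℂ)]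
      refine tsum_congr fun x => ?_
      have hx : (f' : G → ℂ) ((Equiv.mulLeft g) x) = (f : G → ℂ) x := by
        rw [Equiv.coe_mulLeft, hff', inv_mul_cancel_left]
      rw [hx]
      rfl
    have hdi : ∀ i, m i f' - m i f
        = ∑' x, (f : G → ℂ) x * (((η i (g * x) ^ 2 - η i x ^ 2 : ℝ)) : ℂ) := by
      intro i
      rw [hre i, hmdef i f, ← Summable.tsum_sub (hsum1 i) (hmsum i f)]
      refine tsum_congr fun x => ?_
      push_cast
      ring
    have hbound : ∀ i : Finset G × ℕ, g⁻¹ ∈ i.1 →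
        ‖m i f' - m i f‖ ≤ C * (Real.sqrt (5/(i.2+1)) * Real.sqrt 24) := by
      intro i hg
      set a : G → ℝ := fun x => |η i (g * x) - η i x| with ha
      set c : G → ℝ := fun x => η i (g * x) + η i x with hc
      have ha2 : ∀ x, a x ^ 2 = (η i (g * x) - η i x) ^ 2 := fun x => sq_abs _
      have hasum : Summable fun x => a x ^ 2 := by
        refine Summable.of_nonneg_of_le (fun x => sq_nonneg _) (fun x => ?_)
          (((hsumg i).mul_left 2).add ((hsum i).mul_left 2))
        rw [ha2 x]
        nlinarith [sq_nonneg (η i (g*x) + η i x), sq_nonneg (η i (g*x) - η i x)]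
      have hcsum : Summable fun x => c x ^ 2 := by
        refine Summable.of_nonneg_of_le (fun x => sq_nonneg _) (fun x => ?_)
          (((hsumg i).mul_left 2).add ((hsum i).mul_left 2))
        simp only [hc]
        nlinarith [sq_nonneg (η i (g*x) - η i x)]
      have hprod : Summable fun x => a x * c x := summable_mul_of_sq hasum hcsum
      have hnormsum : Summable fun x => ‖(f : G → ℂ) x * (((η i (g * x) ^ 2 - η i x ^ 2 : ℝ)) : ℂ)‖ := by
        refine Summable.of_nonneg_of_le (fun x => norm_nonneg _) (fun x => ?_) (hprod.mul_left C)
        rw [norm_mul, Complex.norm_real, Real.norm_eq_abs]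
        have heq : |η i (g * x) ^ 2 - η i x ^ 2| = a x * c x := by
          simp only [ha, hc]
          rw [show η i (g*x)^2 - η i x^2 = (η i (g*x) - η i x) * (η i (g*x) + η i x) by ring]
          rw [abs_mul, abs_of_nonneg (add_nonneg (h0 i (g*x)) (h0 i x))]
        rw [heq]
        exact mul_le_mul_of_nonneg_right (hC x)
          (mul_nonneg (abs_nonneg _) (add_nonneg (h0 i (g*x)) (h0 i x)))
      have hA : (∑' x, a x ^ 2) ≤ 5/(i.2+1) := by
        have := hinv i g⁻¹ hg
        simp only [inv_inv] at this
        calc (∑' x, a x ^ 2) = ∑' x, (η i (g * x) - η i x) ^ 2 := tsum_congr ha2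
          _ ≤ 5/(i.2+1) := this
      have hCsum : (∑' x, c x ^ 2) ≤ 24 := by
        have h1 : (∑' x, c x ^ 2) ≤ ∑' x, (2 * η i (g*x)^2 + 2 * η i x ^2) := by
          refine Summable.tsum_le_tsum (fun x => ?_) hcsum
            (((hsumg i).mul_left 2).add ((hsum i).mul_left 2))
          simp only [hc]
          nlinarith [sq_nonneg (η i (g*x) - η i x)]
        have h2 : (∑' x, (2 * η i (g*x)^2 + 2 * η i x ^2))
            = 2 * (∑' x, η i (g*x)^2) + 2 * (∑' x, η i x^2) := by
          rw [Summable.tsum_add ((hsumg i).mul_left 2) ((hsum i).mul_left 2), tsum_mul_left, tsum_mul_left]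
        rw [h2, htsumg i] at h1
        have := hNle i
        linarith
      calc ‖m i f' - m i f‖
          ≤ ∑' x, ‖(f : G → ℂ) x * (((η i (g * x) ^ 2 - η i x ^ 2 : ℝ)) : ℂ)‖ := by
            rw [hdi i]; exact norm_tsum_le_tsum_norm hnormsum
        _ ≤ ∑' x, C * (a x * c x) := by
            refine Summable.tsum_le_tsum (fun x => ?_) hnormsum (hprod.mul_left C)
            rw [norm_mul, Complex.norm_real, Real.norm_eq_abs]
            have heq : |η i (g * x) ^ 2 - η i x ^ 2| = a x * c x := by
              simp only [ha, hc]
              rw [show η i (g*x)^2 - η i x^2 = (η i (g*x) - η i x) * (η i (g*x) + η i x) by ring]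
              rw [abs_mul, abs_of_nonneg (add_nonneg (h0 i (g*x)) (h0 i x))]
            rw [heq]
            exact mul_le_mul_of_nonneg_right (hC x)
              (mul_nonneg (abs_nonneg _) (add_nonneg (h0 i (g*x)) (h0 i x)))
        _ = C * ∑' x, a x * c x := tsum_mul_left
        _ ≤ C * (Real.sqrt (∑' x, a x ^ 2) * Real.sqrt (∑' x, c x ^ 2)) := by
            refine mul_le_mul_of_nonneg_left ?_ hC0
            exact tsum_mul_le_sqrt (fun x => abs_nonneg _)
              (fun x => add_nonneg (h0 i (g*x)) (h0 i x)) hasum hcsum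
        _ ≤ C * (Real.sqrt (5/(i.2+1)) * Real.sqrt 24) := by
            refine mul_le_mul_of_nonneg_left ?_ hC0
            exact mul_le_mul (Real.sqrt_le_sqrt hA) (Real.sqrt_le_sqrt hCsum)
              (Real.sqrt_nonneg _) (Real.sqrt_nonneg _)
    have hev : ∀ᶠ i : Finset G × ℕ in 𝓕,
        ‖m i f' - m i f‖ ≤ C * (Real.sqrt (5/(i.2+1)) * Real.sqrt 24) := by
      have h1 : ∀ᶠ S : Finset G in Filter.atTop, g⁻¹ ∈ S := by
        refine Filter.eventually_atTop.mpr ⟨{g⁻¹}, fun S hS => ?_⟩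
        exact Finset.singleton_subset_iff.mp hS
      filter_upwards [h1.prod_inl Filter.atTop] with i hi
      exact hbound i hi
    have hb0 : Filter.Tendsto
        (fun i : Finset G × ℕ => C * (Real.sqrt (5/(i.2+1)) * Real.sqrt 24)) 𝓕 (nhds 0) := by
      have h5 : Filter.Tendsto (fun n : ℕ => (5:ℝ)/(n+1)) Filter.atTop (nhds 0) := by
        have := tendsto_one_div_add_atTop_nhds_zero_nat.const_mul (5:ℝ)
        simp only [mul_zero] at this
        refine this.congr fun n => ?_
        rw [mul_one_div]
      have hs : Filter.Tendsto (fun n : ℕ => Real.sqrt (5/(n+1))) Filter.atTop (nhds 0) := by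
        have h := (Real.continuous_sqrt.tendsto 0).comp h5
        rw [Real.sqrt_zero] at h
        exact h
      have hcomp : Filter.Tendsto (fun i : Finset G × ℕ => Real.sqrt (5/(i.2+1))) 𝓕 (nhds 0) :=
        hs.comp Filter.tendsto_snd
      have := (hcomp.mul_const (Real.sqrt 24)).const_mul C
      simpa using this
    have hzero : Filter.Tendsto (fun i => m i f' - m i f) ↑U (nhds 0) :=
      (squeeze_zero_norm' hev hb0).mono_left hU
    have hsub : Filter.Tendsto (fun i => m i f' - m i f) ↑U (nhds (Ψ₀ f' - Ψ₀ f)) :=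
      (hΨ f').sub (hΨ f)
    have := tendsto_nhds_unique hsub hzero
    have : Ψ₀ f' = Ψ₀ f := by
      have h := sub_eq_zero.mp this
      exact h
    exact this

lemma exists_eta {G₁ G₂ H : Type*} [Group G₁] [Group G₂]
    [NormedAddCommGroup H] [InnerProductSpace ℂ H]
    (π : (G₁ × G₂) →* (H ≃ₗᵢ[ℂ] H)) (hreg : WeaklyRegular π)
    (S : Finset G₁) (ε : ℝ) (hε : 0 < ε)
    (v : H) (hv1 : ‖v‖ = 1) (hvs : ∀ s ∈ S, ‖π (s, 1) v - v‖ ^ 2 < ε) :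
    ∃ η : G₁ → ℝ, (∀ x, 0 ≤ η x) ∧ (Summable fun x => η x ^ 2) ∧
      |(∑' x, η x ^ 2) - 1| ≤ 5 * ε ∧
      ∀ s ∈ S, (∑' x, (η (s⁻¹ * x) - η x) ^ 2) ≤ 5 * ε := by
  classical
  set F : Finset (G₁ × G₂) := insert 1 (S.image fun s => (s, (1:G₂))) with hF
  obtain ⟨n, ξ, hξsum, hξ⟩ := hreg v F ε hε
  have hfib : ∀ (i : Fin n) (x : G₁), Summable fun y : G₂ => ‖ξ i (x, y)‖ ^ 2 :=
    fun i x => (hξsum i).prod_factor x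
  set ζ : G₁ → (Fin n × G₂) → ℝ := fun x k => ‖ξ k.1 (x, k.2)‖ with hζ
  have hζsq : ∀ x, Summable fun k => ζ x k ^ 2 := by
    intro x
    rw [summable_prod_of_nonneg (fun k => sq_nonneg _)]
    exact ⟨fun i => hfib i x, Summable.of_finite⟩
  set η : G₁ → ℝ := fun x => Real.sqrt (∑' k, ζ x k ^ 2) with hη
  have h0 : ∀ x, 0 ≤ η x := fun x => Real.sqrt_nonneg _
  have hη2 : ∀ x, η x ^ 2 = ∑' k, ζ x k ^ 2 :=
    fun x => Real.sq_sqrt (tsum_nonneg fun k => sq_nonneg _)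
  have hK : ∀ x, (∑' k : Fin n × G₂, ζ x k ^ 2) = ∑ i, ∑' y, ‖ξ i (x, y)‖ ^ 2 := by
    intro x
    rw [Summable.tsum_prod' (hζsq x) (fun i => hfib i x)]
    rw [tsum_fintype]
  have hsliceSum : ∀ i : Fin n, Summable fun x : G₁ => ∑' y, ‖ξ i (x, y)‖ ^ 2 :=
    fun i => ((summable_prod_of_nonneg (fun p => sq_nonneg _)).mp (hξsum i)).2
  have hsq : Summable fun x => η x ^ 2 := by
    refine Summable.congr (summable_sum (f := fun (i : Fin n) (x : G₁) => ∑' y, ‖ξ i (x, y)‖ ^ 2)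
      (s := Finset.univ) (fun i _ => hsliceSum i)) (fun x => ?_)
    rw [hη2 x, hK x]
  have hNval : (∑' x, η x ^ 2) = ∑ i, ∑' p : G₁ × G₂, ‖ξ i p‖ ^ 2 := by
    have h1 : (∑' x, η x ^ 2) = ∑' x, ∑ i, ∑' y, ‖ξ i (x, y)‖ ^ 2 :=
      tsum_congr fun x => by rw [hη2 x, hK x]
    rw [h1, Summable.tsum_finsetSum (fun i _ => hsliceSum i)]
    refine Finset.sum_congr rfl fun i _ => ?_
    rw [Summable.tsum_prod' (hξsum i) (fun x => hfib i x)]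
  -- value at the identity
  have h1F : (1 : G₁ × G₂) ∈ F := Finset.mem_insert_self _ _
  have hNnear : |(∑' x, η x ^ 2) - 1| < ε := by
    have h := hξ 1 h1F
    have he1 : ((inner ℂ ((π 1) v) v : ℂ)) = 1 := by
      rw [map_one]
      have : ((1 : H ≃ₗᵢ[ℂ] H)) v = v := rfl
      rw [this, inner_self_eq_norm_sq_to_K, hv1]
      norm_num
    have he2 : ∀ i : Fin n, (∑' x : G₁ × G₂, ξ i ((1:G₁ × G₂)⁻¹ * x) * (starRingEnd ℂ) (ξ i x))
        = ((∑' p : G₁ × G₂, ‖ξ i p‖ ^ 2 : ℝ) : ℂ) := by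
      intro i
      rw [Complex.ofReal_tsum]
      refine tsum_congr fun p => ?_
      rw [inv_one, one_mul, Complex.mul_conj, Complex.normSq_eq_norm_sq]
    rw [he1] at h
    have he3 : (∑ i, ∑' x : G₁ × G₂, ξ i ((1:G₁ × G₂)⁻¹ * x) * (starRingEnd ℂ) (ξ i x))
        = ((∑' x, η x ^ 2 : ℝ) : ℂ) := by
      rw [Finset.sum_congr rfl (fun i _ => he2 i), hNval]
      push_cast
      ring
    rw [he3] at h
    have : ((1:ℂ) - ((∑' x, η x ^ 2 : ℝ) : ℂ)) = (((1 - ∑' x, η x ^ 2 : ℝ)) : ℂ) := by push_cast; ring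
    rw [this, Complex.norm_real, Real.norm_eq_abs] at h
    rwa [abs_sub_comm]
  have hNle : (∑' x, η x ^ 2) ≤ 1 + ε := by
    have := (abs_le.mp hNnear.le).2
    linarith
  refine ⟨η, h0, hsq, by linarith [abs_le.mp hNnear.le], ?_⟩
  intro s hs
  set g : G₁ × G₂ := (s, 1) with hg
  have hgF : g ∈ F := Finset.mem_insert_of_mem (Finset.mem_image_of_mem _ hs)
  have hc := hξ g hgF
  -- real part of the inner product
  have hrei : 1 - ε/2 < RCLike.re (inner ℂ ((π g) v) v : ℂ) := by
    have hexp := norm_sub_sq (𝕜 := ℂ) ((π g) v) v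
    rw [LinearIsometryEquiv.norm_map, hv1] at hexp
    have hlt := hvs s hs
    nlinarith
  -- summability of coefficient products
  have hξg : ∀ i : Fin n, Summable fun p : G₁ × G₂ => ‖ξ i (g⁻¹ * p)‖ ^ 2 := by
    intro i
    have := ((Equiv.mulLeft g⁻¹).summable_iff (f := fun p : G₁ × G₂ => ‖ξ i p‖ ^ 2))
    simp only [Function.comp_def, Equiv.coe_mulLeft] at this
    exact this.mpr (hξsum i)
  have husum : ∀ i : Fin n, Summable fun p : G₁ × G₂ => ξ i (g⁻¹ * p) * (starRingEnd ℂ) (ξ i p) := by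
    intro i
    refine Summable.of_norm_bounded (((hξg i).add (hξsum i)).div_const 2) fun p => ?_
    rw [norm_mul, RCLike.norm_conj]
    nlinarith [sq_nonneg (‖ξ i (g⁻¹ * p)‖ - ‖ξ i p‖), norm_nonneg (ξ i (g⁻¹ * p)), norm_nonneg (ξ i p)]
  have hprodfib : ∀ (i : Fin n) (x : G₁),
      Summable fun y : G₂ => ξ i (g⁻¹ * (x, y)) * (starRingEnd ℂ) (ξ i (x, y)) :=
    fun i x => (husum i).prod_factor x
  -- the fiberwise sums
  set w : G₁ → ℂ := fun x => ∑ i, ∑' y, ξ i (g⁻¹ * (x, y)) * (starRingEnd ℂ) (ξ i (x, y)) with hw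
  have hwslice : ∀ i : Fin n, Summable fun x : G₁ =>
      ∑' y, ξ i (g⁻¹ * (x, y)) * (starRingEnd ℂ) (ξ i (x, y)) := by
    intro i
    have h := (husum i).hasSum.prod_fiberwise (fun x => (hprodfib i x).hasSum)
    exact h.summable
  have hwsum : Summable w := summable_sum (fun i _ => hwslice i)
  have hcs : (∑ i, ∑' p : G₁ × G₂, ξ i (g⁻¹ * p) * (starRingEnd ℂ) (ξ i p)) = ∑' x, w x :=
    calc (∑ i, ∑' p : G₁ × G₂, ξ i (g⁻¹ * p) * (starRingEnd ℂ) (ξ i p))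
        = ∑ i, ∑' x, ∑' y, ξ i (g⁻¹ * (x, y)) * (starRingEnd ℂ) (ξ i (x, y)) :=
          Finset.sum_congr rfl (fun i _ => Summable.tsum_prod' (husum i) (hprodfib i))
      _ = ∑' x, w x := (Summable.tsum_finsetSum (fun i _ => hwslice i)).symm
  -- pointwise bound on the real part of w
  have hwre : ∀ x, (w x).re ≤ η (s⁻¹ * x) * η x := by
    intro x
    have hfibnorm : ∀ i : Fin n, Summable fun y : G₂ =>
        ‖ξ i (g⁻¹ * (x, y)) * (starRingEnd ℂ) (ξ i (x, y))‖ := by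
      intro i
      have hgx : ∀ y : G₂, g⁻¹ * ((x : G₁), y) = (s⁻¹ * x, y) := by
        intro y
        rw [hg, Prod.inv_mk, Prod.mk_mul_mk, inv_one, one_mul]
      refine Summable.of_nonneg_of_le (fun y => norm_nonneg _) (fun y => ?_)
        (((hfib i (s⁻¹ * x)).add (hfib i x)).div_const 2)
      rw [norm_mul, RCLike.norm_conj, hgx y]
      nlinarith [sq_nonneg (‖ξ i (s⁻¹ * x, y)‖ - ‖ξ i (x, y)‖), norm_nonneg (ξ i (s⁻¹ * x, y)),
        norm_nonneg (ξ i (x, y))]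
    have h1 : (w x).re ≤ ‖w x‖ := Complex.re_le_norm (w x)
    have h2 : ‖w x‖ ≤ ∑ i, ‖∑' y, ξ i (g⁻¹ * (x, y)) * (starRingEnd ℂ) (ξ i (x, y))‖ :=
      norm_sum_le _ _
    have h3 : ∀ i : Fin n, ‖∑' y, ξ i (g⁻¹ * (x, y)) * (starRingEnd ℂ) (ξ i (x, y))‖
        ≤ ∑' y, ζ (s⁻¹ * x) (i, y) * ζ x (i, y) := by
      intro i
      refine (norm_tsum_le_tsum_norm (hfibnorm i)).trans ?_
      refine le_of_eq (tsum_congr fun y => ?_)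
      have hgx : g⁻¹ * ((x : G₁), y) = (s⁻¹ * x, y) := by
        rw [hg, Prod.inv_mk, Prod.mk_mul_mk, inv_one, one_mul]
      rw [norm_mul, RCLike.norm_conj, hgx]
    have hmulK : Summable fun k : Fin n × G₂ => ζ (s⁻¹ * x) k * ζ x k :=
      summable_mul_of_sq (hζsq (s⁻¹ * x)) (hζsq x)
    have h4 : (∑ i, ∑' y, ζ (s⁻¹ * x) (i, y) * ζ x (i, y))
        = ∑' k : Fin n × G₂, ζ (s⁻¹ * x) k * ζ x k := by
      rw [Summable.tsum_prod' hmulK (fun i => hmulK.prod_factor i), tsum_fintype]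
    have h5 : (∑' k : Fin n × G₂, ζ (s⁻¹ * x) k * ζ x k) ≤ η (s⁻¹ * x) * η x :=
      tsum_mul_le_sqrt (fun k => norm_nonneg _) (fun k => norm_nonneg _)
        (hζsq (s⁻¹ * x)) (hζsq x)
    calc (w x).re ≤ ‖w x‖ := h1
      _ ≤ ∑ i, ‖∑' y, ξ i (g⁻¹ * (x, y)) * (starRingEnd ℂ) (ξ i (x, y))‖ := h2
      _ ≤ ∑ i, ∑' y, ζ (s⁻¹ * x) (i, y) * ζ x (i, y) := Finset.sum_le_sum (fun i _ => h3 i)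
      _ = ∑' k : Fin n × G₂, ζ (s⁻¹ * x) k * ζ x k := h4
      _ ≤ η (s⁻¹ * x) * η x := h5
  -- summability facts on G₁
  have hsqA : Summable fun x => η (s⁻¹ * x) ^ 2 := by
    have := ((Equiv.mulLeft s⁻¹).summable_iff (f := fun x => η x ^ 2))
    simp only [Function.comp_def, Equiv.coe_mulLeft] at this
    exact this.mpr hsq
  have htsumA : (∑' x, η (s⁻¹ * x) ^ 2) = ∑' x, η x ^ 2 := by
    have := (Equiv.mulLeft s⁻¹).tsum_eq (fun x => η x ^ 2)
    simpa only [Equiv.coe_mulLeft] using this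
  have hP : Summable fun x => η (s⁻¹ * x) * η x := summable_mul_of_sq hsqA hsq
  -- lower bound on T
  have hrew : Summable fun x => (w x).re := by
    have := hwsum.map Complex.reCLM Complex.reCLM.continuous
    exact this
  have hcsre : RCLike.re (∑ i, ∑' p : G₁ × G₂, ξ i (g⁻¹ * p) * (starRingEnd ℂ) (ξ i p) : ℂ)
      = ∑' x, (w x).re := by
    rw [hcs]
    exact Complex.reCLM.map_tsum hwsum
  have hT : 1 - 3/2 * ε ≤ ∑' x, η (s⁻¹ * x) * η x := by
    set cs : ℂ := ∑ i, ∑' p : G₁ × G₂, ξ i (g⁻¹ * p) * (starRingEnd ℂ) (ξ i p) with hcsdef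
    have hre1 : RCLike.re ((inner ℂ ((π g) v) v : ℂ) - cs) ≤ ε := by
      have := Complex.re_le_norm ((inner ℂ ((π g) v) v : ℂ) - cs)
      exact this.trans hc.le
    have hre2 : RCLike.re (inner ℂ ((π g) v) v : ℂ) - RCLike.re cs ≤ ε := by
      rwa [map_sub] at hre1
    have hre3 : 1 - 3/2 * ε ≤ RCLike.re cs := by linarith
    have hre4 : RCLike.re cs = ∑' x, (w x).re := hcsre
    have hre5 : (∑' x, (w x).re) ≤ ∑' x, η (s⁻¹ * x) * η x :=
      Summable.tsum_le_tsum hwre hrew hP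
    linarith
  -- final expansion
  have hexpand : (∑' x, (η (s⁻¹ * x) - η x) ^ 2)
      = (∑' x, η (s⁻¹ * x) ^ 2) + (∑' x, η x ^ 2) - 2 * ∑' x, η (s⁻¹ * x) * η x := by
    have hpt : ∀ x, (η (s⁻¹ * x) - η x) ^ 2
        = (η (s⁻¹ * x) ^ 2 + η x ^ 2) - 2 * (η (s⁻¹ * x) * η x) := fun x => by ring
    rw [tsum_congr hpt, Summable.tsum_sub (hsqA.add hsq) (hP.mul_left 2),
      Summable.tsum_add hsqA hsq, tsum_mul_left]
  rw [hexpand, htsumA]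
  nlinarith [hT, hNle]

lemma weaklyRegular_swap {G₁ G₂ H : Type*} [Group G₁] [Group G₂]
    [NormedAddCommGroup H] [InnerProductSpace ℂ H]
    (π : (G₁ × G₂) →* (H ≃ₗᵢ[ℂ] H)) (hreg : WeaklyRegular π) :
    WeaklyRegular (π.comp (MulEquiv.prodComm : G₂ × G₁ ≃* G₁ × G₂).toMonoidHom) := by
  classical
  intro v F ε hε
  obtain ⟨n, ξ, h1, h2⟩ := hreg v (F.image Prod.swap) ε hε
  refine ⟨n, fun i x => ξ i x.swap, ?_, ?_⟩
  · intro i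
    have := ((Equiv.prodComm G₂ G₁).summable_iff (f := fun x : G₁ × G₂ => ‖ξ i x‖ ^ 2))
    simp only [Function.comp_def, Equiv.coe_prodComm] at this
    exact this.mpr (h1 i)
  · intro g hg
    have hswap : g.swap ∈ F.image Prod.swap := Finset.mem_image_of_mem _ hg
    have h := h2 g.swap hswap
    have he : ∀ i : Fin n, (∑' x : G₂ × G₁, ξ i (g⁻¹ * x).swap * (starRingEnd ℂ) (ξ i x.swap))
        = ∑' x : G₁ × G₂, ξ i (g.swap⁻¹ * x) * (starRingEnd ℂ) (ξ i x) := by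
      intro i
      have := (Equiv.prodComm G₂ G₁).tsum_eq
        (fun x : G₁ × G₂ => ξ i (g.swap⁻¹ * x) * (starRingEnd ℂ) (ξ i x))
      rw [← this]
      refine tsum_congr fun x => ?_
      simp only [Equiv.coe_prodComm]
      rfl
    have hπ : (π.comp (MulEquiv.prodComm : G₂ × G₁ ≃* G₁ × G₂).toMonoidHom) g = π g.swap := rfl
    rw [hπ]
    calc ‖(inner ℂ (π g.swap v) v : ℂ) -
          ∑ i, ∑' x : G₂ × G₁, ξ i (g⁻¹ * x).swap * (starRingEnd ℂ) (ξ i x.swap)‖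
        = ‖(inner ℂ (π g.swap v) v : ℂ) -
          ∑ i, ∑' x : G₁ × G₂, ξ i (g.swap⁻¹ * x) * (starRingEnd ℂ) (ξ i x)‖ := by
          rw [Finset.sum_congr rfl fun i _ => he i]
      _ < ε := h

lemma gap_of_nonamenable {G₁ G₂ H : Type*} [Group G₁] [Group G₂]
    [NormedAddCommGroup H] [InnerProductSpace ℂ H]
    (π : (G₁ × G₂) →* (H ≃ₗᵢ[ℂ] H)) (hreg : WeaklyRegular π)
    (hG₁ : ¬ HasInvariantMean G₁) :
    ∃ (S : Finset G₁) (c : ℝ), 0 < c ∧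
      ∀ v : H, c * ‖v‖ ^ 2 ≤ ∑ s ∈ S, ‖π (s, 1) v - v‖ ^ 2 := by
  by_contra hgap
  push_neg at hgap
  apply hG₁
  have hng : ∀ (S : Finset G₁) (ε : ℝ), 0 < ε →
      ∃ v : H, ‖v‖ = 1 ∧ ∀ s ∈ S, ‖π (s, 1) v - v‖ ^ 2 < ε := by
    intro S ε hε
    obtain ⟨v, hv⟩ := hgap S ε hε
    have hvne : v ≠ 0 := by
      intro h
      rw [h] at hv
      simp only [norm_zero] at hv
      have : (0:ℝ) ≤ ∑ s ∈ S, ‖π (s, 1) (0:H) - 0‖ ^ 2 :=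
        Finset.sum_nonneg fun s _ => sq_nonneg _
      nlinarith
    have hvpos : 0 < ‖v‖ := norm_pos_iff.mpr hvne
    set c : ℂ := ((‖v‖⁻¹ : ℝ) : ℂ) with hcdef
    refine ⟨c • v, ?_, ?_⟩
    · rw [norm_smul, hcdef, Complex.norm_real, Real.norm_eq_abs,
        abs_of_nonneg (inv_nonneg.mpr hvpos.le)]
      field_simp
    · intro s hs
      have hsmul : π (s, 1) (c • v) - c • v = c • (π (s, 1) v - v) := by
        rw [LinearIsometryEquiv.map_smul, smul_sub]
      rw [hsmul, norm_smul, hcdef, Complex.norm_real, Real.norm_eq_abs,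
        abs_of_nonneg (inv_nonneg.mpr hvpos.le)]
      have hterm : ‖π (s, 1) v - v‖ ^ 2 < ε * ‖v‖ ^ 2 := by
        have hle : ‖π (s, 1) v - v‖ ^ 2 ≤ ∑ t ∈ S, ‖π (t, 1) v - v‖ ^ 2 :=
          Finset.single_le_sum (f := fun t => ‖π (t, 1) v - v‖ ^ 2) (fun t _ => sq_nonneg _) hs
        linarith
      rw [mul_pow]
      rw [show (‖v‖⁻¹)^2 = (‖v‖^2)⁻¹ by rw [← inv_pow]]
      rw [inv_mul_lt_iff₀ (by positivity)]
      linarith [hterm]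
  have hηex : ∀ i : Finset G₁ × ℕ, ∃ η : G₁ → ℝ, (∀ x, 0 ≤ η x) ∧
      (Summable fun x => η x ^ 2) ∧ |(∑' x, η x ^ 2) - 1| ≤ 5 / (i.2 + 1) ∧
      ∀ s ∈ i.1, (∑' x, (η (s⁻¹ * x) - η x) ^ 2) ≤ 5 / (i.2 + 1) := by
    intro i
    have hεpos : (0:ℝ) < 1 / (i.2 + 1) := by positivity
    obtain ⟨v, hv1, hvs⟩ := hng i.1 (1 / (i.2 + 1)) hεpos
    obtain ⟨η, hη0, hηsum, hηN, hηinv⟩ := exists_eta π hreg i.1 (1 / (i.2 + 1)) hεpos v hv1 hvs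
    refine ⟨η, hη0, hηsum, ?_, ?_⟩
    · rwa [mul_one_div] at hηN
    · intro s hs
      have := hηinv s hs
      rwa [mul_one_div] at this
  choose η hη0 hηsum hηN hηinv using hηex
  exact mean_of_almost_invariant η hη0 hηsum hηN hηinv


/-- Let `G₁, G₂` be non-amenable groups, `π` a unitary representation of
`G₁ × G₂` weakly contained in the regular representation, and `b` a 1-cocycle.
Then `b` is bounded, hence a 1-coboundary.  In particular
`H¹(G₁ × G₂, H) = 0` for every weakly regular unitary representation. -/
theorem stmt12 {G₁ G₂ H : Type*} [Group G₁] [Group G₂]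
    [NormedAddCommGroup H] [InnerProductSpace ℂ H] [CompleteSpace H]
    (hG₁ : ¬ HasInvariantMean G₁) (hG₂ : ¬ HasInvariantMean G₂)
    (π : (G₁ × G₂) →* (H ≃ₗᵢ[ℂ] H)) (hreg : WeaklyRegular π)
    (b : G₁ × G₂ → H)
    (hb : ∀ g h : G₁ × G₂, b (g * h) = b g + π g (b h)) :
    (∃ C : ℝ, ∀ g : G₁ × G₂, ‖b g‖ ≤ C) ∧
    (∃ v : H, ∀ g : G₁ × G₂, b g = π g v - v) := by
  obtain ⟨S₁, c₁, hc₁, hgap₁⟩ := gap_of_nonamenable π hreg hG₁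
  obtain ⟨S₂, c₂, hc₂, hgap₂⟩ :=
    gap_of_nonamenable (π.comp (MulEquiv.prodComm : G₂ × G₁ ≃* G₁ × G₂).toMonoidHom)
      (weaklyRegular_swap π hreg) hG₂
  -- commuting elements identity
  have hcomm : ∀ g h : G₁ × G₂, g * h = h * g →
      π g (b h) - b h = π h (b g) - b g := by
    intro g h hgh
    have h1 := hb g h
    have h2 := hb h g
    rw [hgh] at h1
    rw [h1] at h2
    have : b g + π g (b h) = b h + π h (b g) := h2
    linear_combination (norm := abel) this
  have hcomm' : ∀ (s : G₁) (t : G₂),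
      π (s, 1) (b (1, t)) - b (1, t) = π (1, t) (b (s, 1)) - b (s, 1) := by
    intro s t
    refine hcomm (s, 1) (1, t) ?_
    rw [Prod.mk_mul_mk, Prod.mk_mul_mk]
    simp
  -- bound on the G₂-factor
  set M₁ : ℝ := ∑ s ∈ S₁, 4 * ‖b (s, 1)‖ ^ 2 with hM₁
  have hM₁0 : 0 ≤ M₁ := Finset.sum_nonneg fun s _ => by positivity
  have hb2 : ∀ t : G₂, ‖b (1, t)‖ ≤ Real.sqrt (M₁ / c₁) := by
    intro t
    have hkey : c₁ * ‖b (1, t)‖ ^ 2 ≤ M₁ := by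
      refine (hgap₁ (b (1, t))).trans ?_
      rw [hM₁]
      refine Finset.sum_le_sum fun s hs => ?_
      rw [hcomm' s t]
      have h1 : ‖π (1, t) (b (s, 1)) - b (s, 1)‖ ≤ 2 * ‖b (s, 1)‖ := by
        refine (norm_sub_le _ _).trans ?_
        rw [LinearIsometryEquiv.norm_map]
        linarith
      nlinarith [norm_nonneg (π (1, t) (b (s, 1)) - b (s, 1)), norm_nonneg (b (s, 1))]
    have h2 : ‖b (1, t)‖ ^ 2 ≤ M₁ / c₁ := by
      rw [le_div_iff₀ hc₁]
      linarith
    calc ‖b (1, t)‖ = Real.sqrt (‖b (1, t)‖ ^ 2) := (Real.sqrt_sq (norm_nonneg _)).symm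
      _ ≤ Real.sqrt (M₁ / c₁) := Real.sqrt_le_sqrt h2
  -- bound on the G₁-factor
  set M₂ : ℝ := ∑ t ∈ S₂, 4 * ‖b (1, t)‖ ^ 2 with hM₂
  have hM₂0 : 0 ≤ M₂ := Finset.sum_nonneg fun t _ => by positivity
  have hb1 : ∀ s : G₁, ‖b (s, 1)‖ ≤ Real.sqrt (M₂ / c₂) := by
    intro s
    have hkey : c₂ * ‖b (s, 1)‖ ^ 2 ≤ M₂ := by
      refine (hgap₂ (b (s, 1))).trans ?_
      rw [hM₂]
      refine Finset.sum_le_sum fun t ht => ?_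
      have hπ : (π.comp (MulEquiv.prodComm : G₂ × G₁ ≃* G₁ × G₂).toMonoidHom) (t, 1)
          = π (1, t) := rfl
      rw [hπ, ← hcomm' s t]
      have h1 : ‖π (s, 1) (b (1, t)) - b (1, t)‖ ≤ 2 * ‖b (1, t)‖ := by
        refine (norm_sub_le _ _).trans ?_
        rw [LinearIsometryEquiv.norm_map]
        linarith
      nlinarith [norm_nonneg (π (s, 1) (b (1, t)) - b (1, t)), norm_nonneg (b (1, t))]
    have h2 : ‖b (s, 1)‖ ^ 2 ≤ M₂ / c₂ := by
      rw [le_div_iff₀ hc₂]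
      linarith
    calc ‖b (s, 1)‖ = Real.sqrt (‖b (s, 1)‖ ^ 2) := (Real.sqrt_sq (norm_nonneg _)).symm
      _ ≤ Real.sqrt (M₂ / c₂) := Real.sqrt_le_sqrt h2
  have hbdd : ∃ C : ℝ, ∀ g : G₁ × G₂, ‖b g‖ ≤ C := by
    refine ⟨Real.sqrt (M₂ / c₂) + Real.sqrt (M₁ / c₁), fun g => ?_⟩
    have hdecomp : (g.1, g.2) = ((g.1, (1:G₂)) : G₁ × G₂) * ((1:G₁), g.2) := by
      rw [Prod.mk_mul_mk, mul_one, one_mul]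
    have h1 : b g = b (g.1, 1) + π (g.1, 1) (b (1, g.2)) := by
      conv_lhs => rw [show g = ((g.1, (1:G₂)) : G₁ × G₂) * ((1:G₁), g.2) by
        rw [Prod.mk_mul_mk, mul_one, one_mul]]
      exact hb _ _
    rw [h1]
    refine (norm_add_le _ _).trans ?_
    rw [LinearIsometryEquiv.norm_map]
    exact add_le_add (hb1 g.1) (hb2 g.2)
  exact ⟨hbdd, bounded_cocycle_coboundary π b hb hbdd⟩

end
end

section
/- Let X be a uniformly locally finite metric space, π : ℂ_u[X] → B(H) a *-representation, and θ : L_u[X] → H a 1-cocycle (a left ℂ_u[X]-module map, where H is a module via π). If sup_t ‖θ(t − ω(t))‖ < ∞, where the supremum runs over all full translations t ∈ Γ_X, then θ is a 1-coboundary: there exists v ∈ H with θ(a) = π(a)v for all a ∈ L_u[X]. -/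
attribute [local instance] Classical.propDecidable

noncomputable section

/-- Product of kernels (matrix multiplication, via `finsum`). -/
def kmul {α : Type*} (a b : α → α → ℂ) : α → α → ℂ :=
  fun x y => ∑ᶠ z, a x z * b z y

/-- Adjoint of a kernel. -/
def kstar {α : Type*} (a : α → α → ℂ) : α → α → ℂ :=
  fun x y => (starRingEnd ℂ) (a y x)

/-- The identity kernel. -/
def kone {α : Type*} : α → α → ℂ := fun x y => if x = y then 1 else 0

/-- A *-representation of the algebraic uniform Roe algebra `ℂ_u[X]` on a
Hilbert space `H`. -/
structure RoeRep (X : Type*) [MetricSpace X] (H : Type*) [NormedAddCommGroup H]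
    [InnerProductSpace ℂ H] [CompleteSpace H] where
  π : (X → X → ℂ) → (H →L[ℂ] H)
  map_add : ∀ a b, a ∈ RoeSet X → b ∈ RoeSet X → π (a + b) = π a + π b
  map_smul : ∀ (c : ℂ) a, a ∈ RoeSet X → π (c • a) = c • π a
  map_mul : ∀ a b, a ∈ RoeSet X → b ∈ RoeSet X → π (kmul a b) = π a ∘L π b
  map_star : ∀ a, a ∈ RoeSet X → π (kstar a) = ContinuousLinearMap.adjoint (π a)
  map_one : π kone = 1

/-- The augmentation ideal `L_u[X] = ker ω ⊆ ℂ_u[X]`, where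
`ω(a)(x) = Σ_y a_{x,y}`. -/
def LSet (X : Type*) [MetricSpace X] : Set (X → X → ℂ) :=
  {a | a ∈ RoeSet X ∧ ∀ x, (∑ᶠ y, a x y) = 0}

/-- The kernel of a full translation, i.e. of a bijection `φ : X ≃ X`. -/
def tker {X : Type*} (φ : X ≃ X) : X → X → ℂ :=
  fun x y => if x = φ y then 1 else 0

/-- Diagonal kernel. -/
def kdiag {X : Type*} (g : X → ℂ) : X → X → ℂ := fun x y => if x = y then g x else 0

section Basic

variable {X : Type*} [MetricSpace X]

lemma IsULF.ball_finite (hX : IsULF X) (R : ℝ) (x : X) : {y : X | dist x y ≤ R}.Finite := by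
  obtain ⟨n, hn⟩ := hX (max R 1) (lt_max_of_lt_right one_pos)
  exact ((hn x).1).subset fun y hy => show dist x y ≤ max R 1 from le_trans hy (le_max_left _ _)

lemma row_finite (hX : IsULF X) {a : X → X → ℂ} (ha : a ∈ RoeSet X) (x : X) :
    (Function.support (a x)).Finite := by
  obtain ⟨-, R, hR⟩ := ha
  exact (hX.ball_finite R x).subset fun y hy => hR x y hy

lemma RoeSet.add {a b : X → X → ℂ} (ha : a ∈ RoeSet X) (hb : b ∈ RoeSet X) :
    a + b ∈ RoeSet X := by
  obtain ⟨⟨C, hC⟩, R, hR⟩ := ha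
  obtain ⟨⟨C', hC'⟩, R', hR'⟩ := hb
  refine ⟨⟨C + C', fun x y => ?_⟩, max R R', fun x y h => ?_⟩
  · exact (norm_add_le _ _).trans (add_le_add (hC x y) (hC' x y))
  · by_cases h1 : a x y ≠ 0
    · exact le_max_of_le_left (hR x y h1)
    · push_neg at h1
      have : b x y ≠ 0 := fun hb0 => h (by simp [Pi.add_apply, h1, hb0])
      exact le_max_of_le_right (hR' x y this)

lemma RoeSet.neg {a : X → X → ℂ} (ha : a ∈ RoeSet X) : -a ∈ RoeSet X := by
  obtain ⟨⟨C, hC⟩, R, hR⟩ := ha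
  exact ⟨⟨C, fun x y => by simpa using hC x y⟩, R, fun x y h => hR x y (by simpa using h)⟩

lemma RoeSet.sub {a b : X → X → ℂ} (ha : a ∈ RoeSet X) (hb : b ∈ RoeSet X) :
    a - b ∈ RoeSet X := by
  rw [sub_eq_add_neg]; exact RoeSet.add ha (RoeSet.neg hb)

lemma kone_mem : (kone : X → X → ℂ) ∈ RoeSet X := by
  refine ⟨⟨1, fun x y => ?_⟩, 0, fun x y h => ?_⟩
  · simp only [kone]; split <;> simp
  · simp only [kone, ne_eq, ite_eq_right_iff, not_forall] at h
    simp [h.1]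

lemma zero_mem_LSet : (0 : X → X → ℂ) ∈ LSet X :=
  ⟨⟨⟨0, fun x y => by simp⟩, 0, fun x y h => absurd rfl h⟩, fun x => by simp⟩

lemma LSet.add (hX : IsULF X) {a b : X → X → ℂ} (ha : a ∈ LSet X) (hb : b ∈ LSet X) :
    a + b ∈ LSet X := by
  refine ⟨RoeSet.add ha.1 hb.1, fun x => ?_⟩
  have : ∑ᶠ y, (a x y + b x y) = (∑ᶠ y, a x y) + ∑ᶠ y, b x y :=
    finsum_add_distrib (row_finite hX ha.1 x) (row_finite hX hb.1 x)
  simpa [this, ha.2 x, hb.2 x] using this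

lemma LSet_sum (hX : IsULF X) {ι : Type*} {s : Finset ι} {f : ι → X → X → ℂ}
    (hf : ∀ k ∈ s, f k ∈ LSet X) : (∑ k ∈ s, f k) ∈ LSet X := by
  classical
  induction s using Finset.induction_on with
  | empty => simpa using zero_mem_LSet
  | @insert k s' hk ih =>
    rw [Finset.sum_insert hk]
    exact LSet.add hX (hf k (Finset.mem_insert_self _ _))
      (ih fun j hj => hf j (Finset.mem_insert_of_mem hj))

lemma RoeSet_sum {ι : Type*} {s : Finset ι} {f : ι → X → X → ℂ}
    (hf : ∀ k ∈ s, f k ∈ RoeSet X) : (∑ k ∈ s, f k) ∈ RoeSet X := by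
  classical
  induction s using Finset.induction_on with
  | empty => simpa using zero_mem_LSet.1
  | @insert k s' hk ih =>
    rw [Finset.sum_insert hk]
    exact RoeSet.add (hf k (Finset.mem_insert_self _ _))
      (ih fun j hj => hf j (Finset.mem_insert_of_mem hj))

/-- Pointwise formula for multiplication by a diagonal kernel. -/
lemma kdiag_kmul (g : X → ℂ) (b : X → X → ℂ) (x y : X) :
    kmul (kdiag g) b x y = g x * b x y := by
  rw [kmul]
  rw [finsum_eq_single _ x (fun z hz => by simp [kdiag, (Ne.symm hz)])]
  simp [kdiag]

/-- Pointwise formula for multiplication by a translation kernel. -/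
lemma tker_kmul (ψ : X ≃ X) (b : X → X → ℂ) (x y : X) :
    kmul (tker ψ) b x y = b (ψ.symm x) y := by
  rw [kmul]
  rw [finsum_eq_single _ (ψ.symm x) (fun z hz => ?_)]
  · simp [tker]
  · have : x ≠ ψ z := fun h => hz (by simp [h])
    simp [tker, this]

lemma kmul_kone (a : X → X → ℂ) : kmul a kone = a := by
  funext x y
  rw [kmul, finsum_eq_single _ y (fun z hz => by simp [kone, hz])]
  simp [kone]

lemma tker_comp (φ ψ : X ≃ X) : kmul (tker φ) (tker ψ) = tker (ψ.trans φ) := by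
  funext x y
  rw [tker_kmul]
  simp only [tker, Equiv.trans_apply]
  congr 1
  rw [eq_iff_iff, Equiv.symm_apply_eq]

lemma tker_refl : tker (Equiv.refl X) = kone := by
  funext x y; simp [tker, kone]; congr

lemma kstar_tker (ψ : X ≃ X) : kstar (tker ψ) = tker ψ.symm := by
  funext x y
  simp only [kstar, tker]
  rw [show (y = ψ x) = (x = ψ.symm y) from by
    rw [eq_iff_iff]; exact ⟨fun h => by simp [h], fun h => by simp [h]⟩]
  split <;> simp

lemma tker_mem {ψ : X ≃ X} {D : ℝ} (hψ : ∀ y, dist (ψ y) y ≤ D) : tker ψ ∈ RoeSet X := by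
  refine ⟨⟨1, fun x y => ?_⟩, D, fun x y h => ?_⟩
  · simp only [tker]; split <;> simp
  · simp only [tker, ne_eq, ite_eq_right_iff, not_forall] at h
    rw [h.1]; exact hψ y

lemma kdiag_mem {g : X → ℂ} {C : ℝ} (hg : ∀ x, ‖g x‖ ≤ C) : kdiag g ∈ RoeSet X := by
  refine ⟨⟨max C 0, fun x y => ?_⟩, 0, fun x y h => ?_⟩
  · simp only [kdiag]; split
    · exact le_max_of_le_left (hg x)
    · simp
  · simp only [kdiag, ne_eq, ite_eq_right_iff, not_forall] at h
    simp [h.1]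

lemma tker_sub_kone_mem_LSet {ψ : X ≃ X} {D : ℝ} (hψ : ∀ y, dist (ψ y) y ≤ D) :
    tker ψ - kone ∈ LSet X := by
  refine ⟨RoeSet.sub (tker_mem hψ) kone_mem, fun x => ?_⟩
  have h1 : ∑ᶠ y, tker ψ x y = 1 := by
    rw [finsum_eq_single _ (ψ.symm x) (fun z hz => ?_)]
    · simp [tker]
    · have : x ≠ ψ z := fun h => hz (by simp [h])
      simp [tker, this]
  have h2 : ∑ᶠ y, (kone : X → X → ℂ) x y = 1 := by
    rw [finsum_eq_single _ x (fun z hz => by simp [kone, Ne.symm hz])]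
    simp [kone]
  have hs1 : (Function.support (tker ψ x)).Finite := by
    apply Set.Finite.subset (Set.finite_singleton (ψ.symm x))
    intro z hz
    simp only [Function.mem_support, tker, ne_eq, ite_eq_right_iff, not_forall] at hz
    simp [hz.1]
  have hs2 : (Function.support ((kone : X → X → ℂ) x)).Finite := by
    apply Set.Finite.subset (Set.finite_singleton x)
    intro z hz
    simp only [Function.mem_support, kone, ne_eq, ite_eq_right_iff, not_forall] at hz
    simp [hz.1]
  have : ∑ᶠ y, (tker ψ x y - kone x y) = (∑ᶠ y, tker ψ x y) - ∑ᶠ y, (kone : X → X → ℂ) x y :=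
    finsum_sub_distrib hs1 hs2
  simpa [h1, h2] using this

lemma kdiag_kmul_mem {g : X → ℂ} {C : ℝ} (hg : ∀ x, ‖g x‖ ≤ C) {b : X → X → ℂ}
    (hb : b ∈ RoeSet X) : kmul (kdiag g) b ∈ RoeSet X := by
  obtain ⟨⟨C', hC'⟩, R, hR⟩ := hb
  refine ⟨⟨max C 0 * max C' 0, fun x y => ?_⟩, R, fun x y h => ?_⟩
  · rw [kdiag_kmul, norm_mul]
    exact mul_le_mul (le_max_of_le_left (hg x)) (le_max_of_le_left (hC' x y))
      (norm_nonneg _) (le_max_right _ _)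
  · rw [kdiag_kmul] at h
    exact hR x y (right_ne_zero_of_mul h)

lemma tker_kmul_mem {ψ : X ≃ X} {D : ℝ} (hψ : ∀ y, dist (ψ y) y ≤ D) {b : X → X → ℂ}
    (hb : b ∈ RoeSet X) : kmul (tker ψ) b ∈ RoeSet X := by
  obtain ⟨⟨C', hC'⟩, R, hR⟩ := hb
  refine ⟨⟨C', fun x y => ?_⟩, D + R, fun x y h => ?_⟩
  · rw [tker_kmul]; exact hC' _ _
  · rw [tker_kmul] at h
    calc dist x y ≤ dist x (ψ.symm x) + dist (ψ.symm x) y := dist_triangle _ _ _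
    _ ≤ D + R := by
        refine add_le_add ?_ (hR _ _ h)
        have := hψ (ψ.symm x)
        rwa [Equiv.apply_symm_apply] at this

lemma kdiag_kmul_mem_LSet (hX : IsULF X) {g : X → ℂ} {C : ℝ} (hg : ∀ x, ‖g x‖ ≤ C)
    {b : X → X → ℂ} (hb : b ∈ LSet X) : kmul (kdiag g) b ∈ LSet X := by
  refine ⟨kdiag_kmul_mem hg hb.1, fun x => ?_⟩
  have : ∀ y, kmul (kdiag g) b x y = g x * b x y := kdiag_kmul g b x
  rw [finsum_congr this, ← mul_finsum _ _, hb.2 x, mul_zero]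

lemma tker_kmul_mem_LSet {ψ : X ≃ X} {D : ℝ} (hψ : ∀ y, dist (ψ y) y ≤ D)
    {b : X → X → ℂ} (hb : b ∈ LSet X) : kmul (tker ψ) b ∈ LSet X := by
  refine ⟨tker_kmul_mem hψ hb.1, fun x => ?_⟩
  have : ∀ y, kmul (tker ψ) b x y = b (ψ.symm x) y := tker_kmul ψ b x
  rw [finsum_congr this, hb.2]

end Basic

section Matching

variable {X : Type*} (M : X → X → Prop)

/-- The pairing function of a partial matching. -/
def mfun : X → X := fun x =>
  if h : ∃ y, M x y then h.choose else if h : ∃ w, M w x then h.choose else x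

lemma mfun_eq_of (h1 : ∀ x y y', M x y → M x y' → y = y') {x y : X} (hxy : M x y) :
    mfun M x = y := by
  have hA : ∃ y', M x y' := ⟨y, hxy⟩
  rw [mfun, dif_pos hA]
  exact h1 x _ y hA.choose_spec hxy

lemma mfun_eq_of' (h2 : ∀ x x' y, M x y → M x' y → x = x')
    (h3 : ∀ x y z, M x y → M y z → False) {x y : X} (hxy : M x y) : mfun M y = x := by
  have hA : ¬ ∃ z, M y z := fun ⟨z, hz⟩ => h3 x y z hxy hz
  have hB : ∃ w, M w y := ⟨x, hxy⟩
  rw [mfun, dif_neg hA, dif_pos hB]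
  exact h2 _ x y hB.choose_spec hxy

lemma mfun_invol (h1 : ∀ x y y', M x y → M x y' → y = y')
    (h2 : ∀ x x' y, M x y → M x' y → x = x')
    (h3 : ∀ x y z, M x y → M y z → False) : Function.Involutive (mfun M) := by
  intro x
  by_cases hA : ∃ y, M x y
  · have h := hA.choose_spec
    have hx : mfun M x = hA.choose := mfun_eq_of M h1 h
    rw [hx]
    exact mfun_eq_of' M h2 h3 h
  · by_cases hB : ∃ w, M w x
    · have h := hB.choose_spec
      have hx : mfun M x = hB.choose := mfun_eq_of' M h2 h3 h
      rw [hx]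
      exact mfun_eq_of M h1 h
    · have hx : mfun M x = x := by rw [mfun, dif_neg hA, dif_neg hB]
      rw [hx, hx]

lemma mfun_cases (x : X) : mfun M x = x ∨ M x (mfun M x) ∨ M (mfun M x) x := by
  by_cases hA : ∃ y, M x y
  · right; left
    rw [mfun, dif_pos hA]; exact hA.choose_spec
  · by_cases hB : ∃ w, M w x
    · right; right
      rw [mfun, dif_neg hA, dif_pos hB]; exact hB.choose_spec
    · left; rw [mfun, dif_neg hA, dif_neg hB]

variable (h1 : ∀ x y y', M x y → M x y' → y = y')
  (h2 : ∀ x x' y, M x y → M x' y → x = x')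
  (h3 : ∀ x y z, M x y → M y z → False)

/-- The involution of `X` swapping matched pairs. -/
def mperm : X ≃ X := Function.Involutive.toPerm _ (mfun_invol M h1 h2 h3)

lemma mperm_apply (x : X) : mperm M h1 h2 h3 x = mfun M x := rfl

lemma mperm_invol (x : X) : mperm M h1 h2 h3 (mperm M h1 h2 h3 x) = x :=
  mfun_invol M h1 h2 h3 x

lemma mperm_pair {x y : X} (hxy : M x y) :
    mperm M h1 h2 h3 x = y ∧ mperm M h1 h2 h3 y = x :=
  ⟨mfun_eq_of M h1 hxy, mfun_eq_of' M h2 h3 hxy⟩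

lemma mperm_cases (x : X) :
    mperm M h1 h2 h3 x = x ∨ M x (mperm M h1 h2 h3 x) ∨ M (mperm M h1 h2 h3 x) x :=
  mfun_cases M x

end Matching

section Height

variable {X : Type*}

/-- Height function: number of predecessor steps of a partial injection which is
increasing for the well-ordering. -/
def hgt (P : X → X → Prop) (hP : ∀ x y, P x y → WellOrderingRel x y) : X → ℕ :=
  (IsWellFounded.wf (r := @WellOrderingRel X)).fix
    (fun x ih => if hx : ∃ w, P w x then ih hx.choose (hP _ _ hx.choose_spec) + 1 else 0)

lemma hgt_succ (P : X → X → Prop) (hP : ∀ x y, P x y → WellOrderingRel x y)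
    {w x : X} (hw : P w x) (huniq : ∀ w', P w' x → w' = w) :
    hgt P hP x = hgt P hP w + 1 := by
  have hx : ∃ w', P w' x := ⟨w, hw⟩
  show (IsWellFounded.wf (r := @WellOrderingRel X)).fix _ x = _
  rw [WellFounded.fix_eq]
  rw [dif_pos hx]
  have hcw : hx.choose = w := huniq _ hx.choose_spec
  have h2 : hgt P hP hx.choose = hgt P hP w := by rw [hcw]
  exact congrArg (· + 1) h2

end Height


section Decomp

variable {X : Type*} [MetricSpace X]

def bidx (R' : ℝ) (x y : X) : ℕ :=
  {z : X | dist x z ≤ R' ∧ WellOrderingRel z y}.ncard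

def upRel (a : X → X → ℂ) (R' : ℝ) (i j : ℕ) (x y : X) : Prop :=
  (a x y ≠ 0 ∨ a y x ≠ 0) ∧ WellOrderingRel x y ∧ bidx R' x y = i ∧ bidx R' y x = j

lemma upRel_sub (a : X → X → ℂ) (R' : ℝ) (i j : ℕ) :
    ∀ x y : X, upRel a R' i j x y → WellOrderingRel x y := fun _ _ h => h.2.1

def hgt' (a : X → X → ℂ) (R' : ℝ) (i j : ℕ) : X → ℕ :=
  hgt (upRel a R' i j) (upRel_sub a R' i j)

def mRel (a : X → X → ℂ) (R' : ℝ) (κ : ℕ × ℕ × ℕ) (x y : X) : Prop :=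
  upRel a R' κ.1 κ.2.1 x y ∧ hgt' a R' κ.1 κ.2.1 x % 2 = κ.2.2

lemma decomp (hX : IsULF X) {a : X → X → ℂ} (ha : a ∈ LSet X) :
    ∃ (K : Finset (ℕ × ℕ × ℕ)) (g : ℕ × ℕ × ℕ → X → ℂ) (φ : ℕ × ℕ × ℕ → X ≃ X),
      (∀ κ ∈ K, ∃ C : ℝ, ∀ x, ‖g κ x‖ ≤ C) ∧
      (∀ κ ∈ K, ∃ D : ℝ, ∀ y, dist ((φ κ) y) y ≤ D) ∧
      a = ∑ κ ∈ K, kmul (kdiag (g κ)) (tker (φ κ) - kone) := by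
  classical
  obtain ⟨⟨⟨C, hC⟩, R, hRa⟩, hω⟩ := ha
  set R' : ℝ := max R 1 with hR'def
  have hR'pos : (0:ℝ) < R' := lt_max_of_lt_right one_pos
  have hprop : ∀ x y, a x y ≠ 0 → dist x y ≤ R' := fun x y h =>
    (hRa x y h).trans (le_max_left _ _)
  obtain ⟨n, hn⟩ := hX R' hR'pos
  have hfin : ∀ x : X, {y : X | dist x y ≤ R'}.Finite := fun x => (hn x).1
  have hUE : ∀ x y, (a x y ≠ 0 ∨ a y x ≠ 0) → dist x y ≤ R' := by
    intro x y h; rcases h with h | h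
    · exact hprop x y h
    · rw [dist_comm]; exact hprop y x h
  have htri : ∀ x y : X, x ≠ y → WellOrderingRel x y ∨ WellOrderingRel y x := by
    intro x y hxy
    rcases trichotomous_of WellOrderingRel x y with h | h | h
    · exact Or.inl h
    · exact absurd h hxy
    · exact Or.inr h
  have hirr : ∀ x : X, ¬ WellOrderingRel x x := fun x => irrefl_of WellOrderingRel x
  have hasymm : ∀ x y : X, WellOrderingRel x y → ¬ WellOrderingRel y x := fun x y h h' =>
    hirr x (_root_.trans_of WellOrderingRel h h')
  have hblt : ∀ x y₁ y₂ : X, dist x y₁ ≤ R' → WellOrderingRel y₁ y₂ →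
      bidx R' x y₁ < bidx R' x y₂ := by
    intro x y₁ y₂ hd h
    apply Set.ncard_lt_ncard
    · constructor
      · intro z hz; exact ⟨hz.1, _root_.trans_of WellOrderingRel hz.2 h⟩
      · intro hsub
        have : y₁ ∈ {z : X | dist x z ≤ R' ∧ WellOrderingRel z y₁} := hsub ⟨hd, h⟩
        exact hirr y₁ this.2
    · exact (hfin x).subset fun z hz => hz.1
  have hbinj : ∀ x y₁ y₂ : X, dist x y₁ ≤ R' → dist x y₂ ≤ R' →
      bidx R' x y₁ = bidx R' x y₂ → y₁ = y₂ := by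
    intro x y₁ y₂ h1 h2 he
    by_contra hne
    rcases htri y₁ y₂ hne with h | h
    · exact absurd he (Nat.ne_of_lt (hblt x y₁ y₂ h1 h))
    · exact absurd he.symm (Nat.ne_of_lt (hblt x y₂ y₁ h2 h))
  have hble : ∀ x y : X, bidx R' x y ≤ n := by
    intro x y
    refine le_trans (Set.ncard_le_ncard ?_ (hfin x)) (hn x).2
    intro z hz; exact hz.1
  have hdistup : ∀ i j (x y : X), upRel a R' i j x y → dist x y ≤ R' :=
    fun i j x y h => hUE x y h.1
  have hru : ∀ i j (x y y' : X), upRel a R' i j x y → upRel a R' i j x y' → y = y' := by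
    intro i j x y y' h h'
    exact hbinj x y y' (hdistup i j x y h) (hdistup i j x y' h')
      (h.2.2.1.trans h'.2.2.1.symm)
  have hlu : ∀ i j (x x' y : X), upRel a R' i j x y → upRel a R' i j x' y → x = x' := by
    intro i j x x' y h h'
    refine hbinj y x x' ?_ ?_ (h.2.2.2.trans h'.2.2.2.symm)
    · rw [dist_comm]; exact hdistup i j x y h
    · rw [dist_comm]; exact hdistup i j x' y h'
  have hsucc : ∀ i j (x y : X), upRel a R' i j x y →
      hgt' a R' i j y = hgt' a R' i j x + 1 := by
    intro i j x y h
    exact hgt_succ _ _ h (fun w' hw' => hlu i j w' x y hw' h)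
  have hM1 : ∀ κ : ℕ×ℕ×ℕ, ∀ x y y' : X, mRel a R' κ x y → mRel a R' κ x y' → y = y' :=
    fun κ x y y' h h' => hru _ _ x y y' h.1 h'.1
  have hM2 : ∀ κ : ℕ×ℕ×ℕ, ∀ x x' y : X, mRel a R' κ x y → mRel a R' κ x' y → x = x' :=
    fun κ x x' y h h' => hlu _ _ x x' y h.1 h'.1
  have hM3 : ∀ κ : ℕ×ℕ×ℕ, ∀ x y z : X, mRel a R' κ x y → mRel a R' κ y z → False := by
    intro κ x y z h h'
    have h4 := hsucc _ _ x y h.1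
    have h5 := h.2
    have h6 := h'.2
    rw [h4] at h6
    omega
  set φp : ℕ×ℕ×ℕ → X ≃ X := fun κ => mperm (mRel a R' κ) (hM1 κ) (hM2 κ) (hM3 κ) with hφp
  have hpair : ∀ κ (x y : X), mRel a R' κ x y → φp κ x = y ∧ φp κ y = x :=
    fun κ x y h => mperm_pair _ _ _ _ h
  have hcasesφ : ∀ κ (x : X), φp κ x = x ∨ mRel a R' κ x (φp κ x) ∨ mRel a R' κ (φp κ x) x :=
    fun κ x => mperm_cases _ _ _ _ x
  have hinv : ∀ κ (x : X), φp κ (φp κ x) = x := fun κ x => mperm_invol _ _ _ _ x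
  set gg : ℕ×ℕ×ℕ → X → ℂ := fun κ x => if φp κ x = x then 0 else a x (φp κ x) with hgg
  set K : Finset (ℕ×ℕ×ℕ) := Finset.range (n+1) ×ˢ Finset.range (n+1) ×ˢ Finset.range 2
    with hK
  have hmemK : ∀ x y : X,
      (bidx R' x y, bidx R' y x, hgt' a R' (bidx R' x y) (bidx R' y x) x % 2) ∈ K := by
    intro x y
    simp only [hK, Finset.mem_product, Finset.mem_range]
    exact ⟨Nat.lt_succ_of_le (hble x y), Nat.lt_succ_of_le (hble y x),
      Nat.mod_lt _ (by norm_num)⟩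
  have hclass : ∀ x y : X, (a x y ≠ 0 ∨ a y x ≠ 0) → WellOrderingRel x y →
      mRel a R' (bidx R' x y, bidx R' y x, hgt' a R' (bidx R' x y) (bidx R' y x) x % 2) x y :=
    fun x y hU ho => ⟨⟨hU, ho, rfl, rfl⟩, rfl⟩
  have huniqκ : ∀ κ (x y : X), y ≠ x → φp κ x = y →
      (a x y ≠ 0 ∨ a y x ≠ 0) ∧
      ((WellOrderingRel x y ∧
        κ = (bidx R' x y, bidx R' y x, hgt' a R' (bidx R' x y) (bidx R' y x) x % 2)) ∨
       (WellOrderingRel y x ∧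
        κ = (bidx R' y x, bidx R' x y, hgt' a R' (bidx R' y x) (bidx R' x y) y % 2))) := by
    intro κ x y hne hφ
    rcases hcasesφ κ x with h | h | h
    · exact absurd (hφ.symm.trans h) hne
    · rw [hφ] at h
      obtain ⟨⟨hU, ho, hi, hj⟩, hp⟩ := h
      exact ⟨hU, Or.inl ⟨ho, by rw [hi, hj, hp]⟩⟩
    · rw [hφ] at h
      obtain ⟨⟨hU, ho, hi, hj⟩, hp⟩ := h
      exact ⟨hU.symm, Or.inr ⟨ho, by rw [hi, hj, hp]⟩⟩
  set jf : X → X → ℕ×ℕ×ℕ := fun x y' =>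
    if WellOrderingRel x y' then
      (bidx R' x y', bidx R' y' x, hgt' a R' (bidx R' x y') (bidx R' y' x) x % 2)
    else
      (bidx R' y' x, bidx R' x y', hgt' a R' (bidx R' y' x) (bidx R' x y') y' % 2)
    with hjf
  have hjspec : ∀ x y' : X, y' ≠ x → (a x y' ≠ 0 ∨ a y' x ≠ 0) →
      jf x y' ∈ K ∧ φp (jf x y') x = y' := by
    intro x y' hne hU
    by_cases ho : WellOrderingRel x y'
    · simp only [hjf, if_pos ho]
      exact ⟨hmemK x y', (hpair _ _ _ (hclass x y' hU ho)).1⟩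
    · have ho' : WellOrderingRel y' x := (htri x y' (Ne.symm hne)).resolve_left ho
      simp only [hjf, if_neg ho]
      exact ⟨hmemK y' x, (hpair _ _ _ (hclass y' x hU.symm ho')).2⟩
  have hκcls : ∀ κ (x y' : X), y' ≠ x → φp κ x = y' → κ = jf x y' := by
    intro κ x y' hne hφ
    obtain ⟨hU, hor⟩ := huniqκ κ x y' hne hφ
    rcases hor with ⟨ho, hk⟩ | ⟨ho, hk⟩
    · simp only [hjf, if_pos ho]; exact hk
    · have hno : ¬ WellOrderingRel x y' := hasymm y' x ho
      simp only [hjf, if_neg hno]; exact hk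
  have hdisp : ∀ κ, ∀ y : X, dist (φp κ y) y ≤ R' := by
    intro κ y
    rcases hcasesφ κ y with h | h | h
    · rw [h]; simp [le_of_lt hR'pos]
    · have h2 := hUE y (φp κ y) h.1.1
      rwa [dist_comm] at h2
    · exact hUE (φp κ y) y h.1.1
  refine ⟨K, gg, φp, ?_, ?_, ?_⟩
  · intro κ hκ
    refine ⟨max C 0, fun x => ?_⟩
    simp only [hgg]
    split
    · simp
    · exact le_max_of_le_left (hC _ _)
  · intro κ hκ
    exact ⟨R', hdisp κ⟩
  · funext x y
    have hsa : (∑ κ ∈ K, kmul (kdiag (gg κ)) (tker (φp κ) - kone)) x y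
        = ∑ κ ∈ K, kmul (kdiag (gg κ)) (tker (φp κ) - kone) x y := by
      rw [Finset.sum_apply, Finset.sum_apply]
    rw [hsa]
    have hterm : ∀ κ, kmul (kdiag (gg κ)) (tker (φp κ) - kone) x y
        = (if φp κ x = y then gg κ x else 0) - (if x = y then gg κ x else 0) := by
      intro κ
      rw [kdiag_kmul]
      have hsub : (tker (φp κ) - kone : X → X → ℂ) x y = tker (φp κ) x y - kone x y := rfl
      rw [hsub, mul_sub]
      congr 1
      · simp only [tker]
        by_cases h : φp κ x = y
        · have hx : x = φp κ y := by rw [← h, hinv]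
          rw [if_pos hx, if_pos h, mul_one]
        · have hx : x ≠ φp κ y := fun hc => h (by rw [hc, hinv])
          rw [if_neg hx, if_neg h, mul_zero]
      · simp only [kone]
        by_cases h : x = y
        · rw [if_pos h, if_pos h, mul_one]
        · rw [if_neg h, if_neg h, mul_zero]
    by_cases hxy : x = y
    · subst hxy
      have hdiag : ∀ κ, kmul (kdiag (gg κ)) (tker (φp κ) - kone) x x = - gg κ x := by
        intro κ
        rw [hterm κ]
        by_cases h : φp κ x = x
        · rw [if_pos h, if_pos rfl]
          have hg0 : gg κ x = 0 := by simp [hgg, h]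
          rw [hg0]; ring
        · rw [if_neg h, if_pos rfl]; ring
      rw [Finset.sum_congr rfl (fun κ _ => hdiag κ)]
      rw [Finset.sum_neg_distrib]
      have hTfin : {y' : X | y' ≠ x ∧ (a x y' ≠ 0 ∨ a y' x ≠ 0)}.Finite :=
        (hfin x).subset (fun y' hy' => hUE x y' hy'.2)
      have hsum : ∑ κ ∈ K, gg κ x = ∑ y' ∈ hTfin.toFinset, a x y' := by
        rw [← Finset.sum_filter_of_ne (p := fun κ => φp κ x ≠ x)
          (fun κ hκ hg hfix => hg (by simp [hgg, hfix]))]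
        refine Finset.sum_nbij' (fun κ => φp κ x) (fun y' => jf x y') ?_ ?_ ?_ ?_ ?_
        · intro κ hκ
          rw [Finset.mem_filter] at hκ
          rw [Set.Finite.mem_toFinset]
          exact ⟨hκ.2, (huniqκ κ x (φp κ x) hκ.2 rfl).1⟩
        · intro y' hy'
          rw [Set.Finite.mem_toFinset] at hy'
          rw [Finset.mem_filter]
          obtain ⟨hK1, hφ1⟩ := hjspec x y' hy'.1 hy'.2
          exact ⟨hK1, by rw [hφ1]; exact hy'.1⟩
        · intro κ hκ
          rw [Finset.mem_filter] at hκ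
          exact (hκcls κ x (φp κ x) hκ.2 rfl).symm
        · intro y' hy'
          rw [Set.Finite.mem_toFinset] at hy'
          exact (hjspec x y' hy'.1 hy'.2).2
        · intro κ hκ
          rw [Finset.mem_filter] at hκ
          simp only [hgg]
          rw [if_neg hκ.2]
      have h0 : ∑ᶠ y', a x y' = 0 := hω x
      rw [finsum_eq_finset_sum_of_support_subset _
        (s := insert x hTfin.toFinset) ?_] at h0
      · rw [Finset.sum_insert (fun hmem => (Set.Finite.mem_toFinset hTfin |>.mp hmem).1 rfl)]
          at h0
        rw [hsum]
        linear_combination h0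
      · intro y' hy'
        by_cases h : y' = x
        · rw [h]; exact Finset.mem_insert_self _ _
        · exact Finset.mem_insert_of_mem (by rw [Set.Finite.mem_toFinset]; exact ⟨h, Or.inl hy'⟩)
    · by_cases hU : a x y ≠ 0 ∨ a y x ≠ 0
      · have hyx : y ≠ x := fun h => hxy h.symm
        obtain ⟨hK1, hφ1⟩ := hjspec x y hyx hU
        rw [Finset.sum_eq_single_of_mem (jf x y) hK1 (fun κ hκ hne => ?_)]
        · rw [hterm, if_pos hφ1, if_neg hxy]
          simp only [hgg]
          rw [if_neg (by rw [hφ1]; exact hyx), hφ1]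
          ring
        · rw [hterm κ, if_neg hxy]
          by_cases hφ : φp κ x = y
          · exact absurd (hκcls κ x y hyx hφ) hne
          · rw [if_neg hφ]; ring
      · push_neg at hU
        rw [Finset.sum_eq_zero (fun κ hκ => ?_), hU.1]
        rw [hterm κ, if_neg hxy]
        by_cases hφ : φp κ x = y
        · rcases (huniqκ κ x y (fun h => hxy h.symm) hφ).1 with h | h
          · exact absurd hU.1 h
          · exact absurd hU.2 h
        · rw [if_neg hφ]; ring

end Decomp

open Filter Topology

section Circumcenter

variable {H : Type*} [NormedAddCommGroup H] [InnerProductSpace ℂ H] [CompleteSpace H]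

/-- Every bounded nonempty subset of a Hilbert space has a "circumcenter" fixed by
all isometries preserving the set. -/
theorem exists_isometry_fixed {S : Set H} (hne : S.Nonempty) {M : ℝ}
    (hbd : ∀ s ∈ S, ‖s‖ ≤ M) :
    ∃ c : H, ∀ T : H → H, Isometry T → T '' S = S → T c = c := by
  classical
  obtain ⟨s₀, hs₀⟩ := hne
  haveI : Nonempty S := ⟨⟨s₀, hs₀⟩⟩
  set r : H → ℝ := fun x => ⨆ s : S, ‖x - (s : H)‖ with hr
  have hbdd : ∀ x : H, BddAbove (Set.range fun s : S => ‖x - (s : H)‖) := by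
    intro x
    refine ⟨‖x‖ + M, ?_⟩
    rintro _ ⟨s, rfl⟩
    exact (norm_sub_le _ _).trans (add_le_add_right (hbd s s.2) _)
  have hle : ∀ (x : H) (s : H), s ∈ S → ‖x - s‖ ≤ r x := fun x s hs =>
    le_ciSup (hbdd x) ⟨s, hs⟩
  have hr_le : ∀ (x : H) (b : ℝ), (∀ s ∈ S, ‖x - s‖ ≤ b) → r x ≤ b := fun x b hb =>
    ciSup_le fun s => hb s s.2
  have hr0 : ∀ x, 0 ≤ r x := fun x => (norm_nonneg _).trans (hle x s₀ hs₀)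
  set ρ : ℝ := ⨅ x : H, r x with hρ
  have hbddb : BddBelow (Set.range r) := ⟨0, by rintro _ ⟨x, rfl⟩; exact hr0 x⟩
  have hρle : ∀ x, ρ ≤ r x := fun x => ciInf_le hbddb x
  have hρ0 : 0 ≤ ρ := le_ciInf hr0
  -- the key parallelogram estimate
  have key : ∀ x y : H, ‖x - y‖ ^ 2 ≤ 2 * r x ^ 2 + 2 * r y ^ 2 - 4 * ρ ^ 2 := by
    intro x y
    set m : H := (2 : ℂ)⁻¹ • (x + y) with hm
    have hpar : ∀ s ∈ S, 4 * ‖m - s‖ ^ 2 + ‖x - y‖ ^ 2 = 2 * ‖x - s‖ ^ 2 + 2 * ‖y - s‖ ^ 2 := by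
      intro s hs
      have h := parallelogram_law_with_norm ℂ (x - s) (y - s)
      have h1 : (x - s) + (y - s) = (2 : ℂ) • (m - s) := by
        rw [hm, smul_sub, smul_smul]
        norm_num
        module
      have h2 : (x - s) - (y - s) = x - y := by abel
      rw [h1, h2, norm_smul] at h
      simp only [Complex.norm_ofNat] at h
      nlinarith [h]
    have hQ : ∀ s ∈ S, ‖m - s‖ ^ 2 ≤ (2 * r x ^ 2 + 2 * r y ^ 2 - ‖x - y‖ ^ 2) / 4 := by
      intro s hs
      have h := hpar s hs
      have h1 : ‖x - s‖ ≤ r x := hle x s hs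
      have h2 : ‖y - s‖ ≤ r y := hle y s hs
      nlinarith [norm_nonneg (x - s), norm_nonneg (y - s), norm_nonneg (m - s)]
    set Q : ℝ := (2 * r x ^ 2 + 2 * r y ^ 2 - ‖x - y‖ ^ 2) / 4 with hQdef
    have hQ0 : 0 ≤ Q := le_trans (sq_nonneg _) (hQ s₀ hs₀)
    have hrm : r m ≤ Real.sqrt Q := by
      refine hr_le m _ fun s hs => ?_
      rw [show ‖m - s‖ = Real.sqrt (‖m - s‖ ^ 2) from (Real.sqrt_sq (norm_nonneg _)).symm]
      exact Real.sqrt_le_sqrt (hQ s hs)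
    have hρm : ρ ≤ Real.sqrt Q := (hρle m).trans hrm
    have : ρ ^ 2 ≤ Q := by
      calc ρ ^ 2 ≤ Real.sqrt Q ^ 2 := by
            exact pow_le_pow_left₀ hρ0 hρm 2
        _ = Q := Real.sq_sqrt hQ0
    rw [hQdef] at this
    linarith
  -- minimizing sequence
  have hex : ∀ n : ℕ, ∃ x : H, r x < ρ + 1 / (n + 1) := by
    intro n
    have : ρ < ρ + 1 / (n + 1 : ℝ) := by
      have : (0 : ℝ) < 1 / (n + 1 : ℝ) := by positivity
      linarith
    exact exists_lt_of_ciInf_lt this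
  choose u hu using hex
  have hub : ∀ n, ρ ≤ r (u n) := fun n => hρle (u n)
  -- Cauchy
  set b : ℕ → ℝ := fun N => Real.sqrt (4 * (ρ + 1 / (N + 1)) ^ 2 - 4 * ρ ^ 2) with hb
  have hcau : CauchySeq u := by
    refine cauchySeq_of_le_tendsto_0 b (fun n m N hn hm => ?_) ?_
    · have hN : ∀ k : ℕ, N ≤ k → r (u k) ≤ ρ + 1 / (N + 1) := by
        intro k hk
        refine (hu k).le.trans (add_le_add_right ?_ _)
        apply one_div_le_one_div_of_le (by positivity)
        exact_mod_cast add_le_add_left (Nat.cast_le.mpr hk) 1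
      have h1 : r (u n) ≤ ρ + 1 / (N + 1) := hN n hn
      have h2 : r (u m) ≤ ρ + 1 / (N + 1) := hN m hm
      have hd : ‖u n - u m‖ ^ 2 ≤ 4 * (ρ + 1 / (N + 1)) ^ 2 - 4 * ρ ^ 2 := by
        have := key (u n) (u m)
        nlinarith [hr0 (u n), hr0 (u m), hρ0]
      rw [dist_eq_norm]
      rw [show ‖u n - u m‖ = Real.sqrt (‖u n - u m‖ ^ 2) from (Real.sqrt_sq (norm_nonneg _)).symm]
      exact Real.sqrt_le_sqrt hd
    · have h1 : Tendsto (fun N : ℕ => ρ + 1 / (N + 1 : ℝ)) atTop (𝓝 ρ) := by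
        have := tendsto_one_div_add_atTop_nhds_zero_nat (𝕜 := ℝ)
        simpa using tendsto_const_nhds.add this
      have h2 : Tendsto (fun N : ℕ => 4 * (ρ + 1 / (N + 1 : ℝ)) ^ 2 - 4 * ρ ^ 2) atTop
          (𝓝 (4 * ρ ^ 2 - 4 * ρ ^ 2)) := (((h1.pow 2).const_mul 4).sub tendsto_const_nhds)
      rw [sub_self] at h2
      have := (Real.continuous_sqrt.tendsto 0).comp h2
      simpa [hb, Function.comp_def] using this
  obtain ⟨c, hc⟩ := cauchySeq_tendsto_of_complete hcau
  -- r c = ρ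
  have hrc : r c = ρ := by
    refine le_antisymm ?_ (hρle c)
    have hseq : ∀ n, r c ≤ r (u n) + ‖c - u n‖ := by
      intro n
      refine hr_le c _ fun s hs => ?_
      calc ‖c - s‖ = ‖(c - u n) + (u n - s)‖ := by abel_nf
        _ ≤ ‖c - u n‖ + ‖u n - s‖ := norm_add_le _ _
        _ ≤ ‖c - u n‖ + r (u n) := add_le_add_right (hle (u n) s hs) _
        _ = r (u n) + ‖c - u n‖ := by ring
    have hnorm : Tendsto (fun n => ‖c - u n‖) atTop (𝓝 0) := by
      have := (tendsto_iff_dist_tendsto_zero).mp hc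
      simpa [dist_eq_norm, norm_sub_rev] using this
    have hrn : Tendsto (fun n => r (u n)) atTop (𝓝 ρ) := by
      have h1 : Tendsto (fun N : ℕ => ρ + 1 / (N + 1 : ℝ)) atTop (𝓝 ρ) := by
        have := tendsto_one_div_add_atTop_nhds_zero_nat (𝕜 := ℝ)
        simpa using tendsto_const_nhds.add this
      exact tendsto_of_tendsto_of_tendsto_of_le_of_le tendsto_const_nhds h1 hub
        (fun n => (hu n).le)
    have : Tendsto (fun n => r (u n) + ‖c - u n‖) atTop (𝓝 (ρ + 0)) := hrn.add hnorm
    rw [add_zero] at this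
    exact ge_of_tendsto' this hseq
  -- conclusion
  refine ⟨c, fun T hT hTS => ?_⟩
  have hrT : ∀ x, r (T x) = r x := by
    intro x
    refine le_antisymm (hr_le _ _ fun s hs => ?_) (hr_le _ _ fun s hs => ?_)
    · rw [← hTS] at hs
      obtain ⟨s', hs', rfl⟩ := hs
      calc ‖T x - T s'‖ = dist (T x) (T s') := (dist_eq_norm _ _).symm
        _ = dist x s' := hT.dist_eq x s'
        _ = ‖x - s'‖ := dist_eq_norm _ _
        _ ≤ r x := hle x s' hs'
    · have hTs : T s ∈ S := hTS ▸ Set.mem_image_of_mem T hs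
      calc ‖x - s‖ = dist x s := (dist_eq_norm _ _).symm
        _ = dist (T x) (T s) := (hT.dist_eq x s).symm
        _ = ‖T x - T s‖ := dist_eq_norm _ _
        _ ≤ r (T x) := hle (T x) (T s) hTs
  have h1 : ‖T c - c‖ ^ 2 ≤ 0 := by
    have := key (T c) c
    rw [hrT c, hrc] at this
    nlinarith
  have h2 : ‖T c - c‖ = 0 := by nlinarith [norm_nonneg (T c - c), sq_nonneg ‖T c - c‖]
  rw [norm_eq_zero, sub_eq_zero] at h2
  exact h2

end Circumcenter


lemma map_sum_of_mem {X : Type*} [MetricSpace X] {V : Type*} [AddCommGroup V]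
    (P : Set (X → X → ℂ)) (hP0 : (0 : X → X → ℂ) ∈ P)
    {ι : Type*}
    (θ : (X → X → ℂ) → V) (θadd : ∀ a b, a ∈ P → b ∈ P → θ (a + b) = θ a + θ b)
    (hPsum : ∀ (s : Finset ι) (f : ι → X → X → ℂ), (∀ k ∈ s, f k ∈ P) → (∑ k ∈ s, f k) ∈ P)
    (s : Finset ι) (f : ι → X → X → ℂ) (hf : ∀ k ∈ s, f k ∈ P) :
    θ (∑ k ∈ s, f k) = ∑ k ∈ s, θ (f k) := by
  classical
  have hθ0 : θ 0 = 0 := by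
    have h := θadd 0 0 hP0 hP0
    rw [add_zero] at h
    have h2 : θ (0 : X → X → ℂ) + 0 = θ 0 + θ 0 := by rw [add_zero]; exact h
    exact (add_left_cancel h2).symm
  induction s using Finset.induction_on with
  | empty => simpa using hθ0
  | @insert k s' hk ih =>
    rw [Finset.sum_insert hk, Finset.sum_insert hk]
    rw [θadd _ _ (hf k (Finset.mem_insert_self _ _))
      (hPsum s' f (fun j hj => hf j (Finset.mem_insert_of_mem hj)))]
    rw [ih (fun j hj => hf j (Finset.mem_insert_of_mem hj))]

/-- If a 1-cocycle `θ : L_u[X] → H` for a *-representation of `ℂ_u[X]` is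
uniformly bounded on `{t − ω(t) : t a full translation}`, then it is a
1-coboundary: `θ(a) = π(a)v` on `L_u[X]` for some `v ∈ H`. -/
theorem stmt15 {X : Type*} [MetricSpace X] (hX : IsULF X)
    {H : Type*} [NormedAddCommGroup H] [InnerProductSpace ℂ H] [CompleteSpace H]
    (ρ : RoeRep X H) (θ : (X → X → ℂ) → H)
    (θadd : ∀ a b, a ∈ LSet X → b ∈ LSet X → θ (a + b) = θ a + θ b)
    (θsmul : ∀ (c : ℂ) a, a ∈ LSet X → θ (c • a) = c • θ a)
    (θmod : ∀ a b, a ∈ RoeSet X → b ∈ LSet X → θ (kmul a b) = ρ.π a (θ b))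
    (hbdd : ∃ C : ℝ, ∀ φ : X ≃ X,
        (∃ D : ℝ, ∀ y, dist (φ y) y ≤ D) → ‖θ (tker φ - kone)‖ ≤ C) :
    ∃ v : H, ∀ a ∈ LSet X, θ a = ρ.π a v := by
  classical
  obtain ⟨C₀, hC₀⟩ := hbdd
  have hπsub : ∀ b c : X → X → ℂ, b ∈ RoeSet X → c ∈ RoeSet X →
      ρ.π (b - c) = ρ.π b - ρ.π c := by
    intro b c hb hc
    have h := ρ.map_add (b - c) c (RoeSet.sub hb hc) hc
    rw [sub_add_cancel] at h
    exact eq_sub_of_add_eq h.symm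
  -- unitarity of translation operators
  have hiso : ∀ (ψ : X ≃ X) (D : ℝ), (∀ y, dist (ψ y) y ≤ D) →
      ∀ w : H, ‖ρ.π (tker ψ) w‖ = ‖w‖ := by
    intro ψ D hD w
    have hψmem : tker ψ ∈ RoeSet X := tker_mem hD
    have hsymmD : ∀ y, dist (ψ.symm y) y ≤ D := fun y => by
      have := hD (ψ.symm y); rwa [Equiv.apply_symm_apply, dist_comm] at this
    have hψ'mem : tker ψ.symm ∈ RoeSet X := tker_mem hsymmD
    have hadj : ρ.π (tker ψ.symm) = ContinuousLinearMap.adjoint (ρ.π (tker ψ)) := by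
      rw [← kstar_tker]; exact ρ.map_star _ hψmem
    have hcomp : ρ.π (tker ψ.symm) ∘L ρ.π (tker ψ) = 1 := by
      rw [← ρ.map_mul _ _ hψ'mem hψmem, tker_comp, Equiv.self_trans_symm, tker_refl, ρ.map_one]
    have h1 : (ContinuousLinearMap.adjoint (ρ.π (tker ψ))) (ρ.π (tker ψ) w) = w := by
      rw [← hadj]
      have := congrArg (fun A : H →L[ℂ] H => A w) hcomp
      simpa using this
    have hin : (inner ℂ (ρ.π (tker ψ) w) (ρ.π (tker ψ) w) : ℂ) = inner ℂ w w := by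
      calc (inner ℂ (ρ.π (tker ψ) w) (ρ.π (tker ψ) w) : ℂ)
          = inner ℂ ((ContinuousLinearMap.adjoint (ρ.π (tker ψ))) (ρ.π (tker ψ) w)) w :=
            (ContinuousLinearMap.adjoint_inner_left _ _ _).symm
        _ = inner ℂ w w := by rw [h1]
    rw [norm_eq_sqrt_re_inner (𝕜 := ℂ) (x := ρ.π (tker ψ) w), norm_eq_sqrt_re_inner (𝕜 := ℂ) (x := w), hin]
  -- the bounded orbit
  set S : Set H := {w | ∃ ψ : X ≃ X, (∃ D : ℝ, ∀ y, dist (ψ y) y ≤ D) ∧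
    w = θ (tker ψ - kone)} with hS
  have hne : S.Nonempty :=
    ⟨θ (tker (Equiv.refl X) - kone), ⟨Equiv.refl X, ⟨0, fun y => by simp⟩, rfl⟩⟩
  have hbd : ∀ s ∈ S, ‖s‖ ≤ C₀ := by rintro s ⟨ψ, hψ, rfl⟩; exact hC₀ ψ hψ
  obtain ⟨c, hc⟩ := exists_isometry_fixed hne hbd
  -- the cocycle identity
  have hcocycle : ∀ (ψ φ : X ≃ X) (Dψ Dφ : ℝ), (∀ y, dist (ψ y) y ≤ Dψ) →
      (∀ y, dist (φ y) y ≤ Dφ) →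
      θ (tker (φ.trans ψ) - kone)
        = ρ.π (tker ψ) (θ (tker φ - kone)) + θ (tker ψ - kone) := by
    intro ψ φ Dψ Dφ hψ hφ
    have h1 : kmul (tker ψ) (tker φ - kone) = tker (φ.trans ψ) - tker ψ := by
      funext x y
      rw [tker_kmul]
      show tker φ (ψ.symm x) y - kone (ψ.symm x) y = tker (φ.trans ψ) x y - tker ψ x y
      congr 1
      · simp only [tker, Equiv.trans_apply]
        congr 1
        rw [eq_iff_iff]; exact Equiv.symm_apply_eq ψ
      · simp only [kone, tker]
        congr 1
        rw [eq_iff_iff]; exact Equiv.symm_apply_eq ψ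
    have h2 : tker (φ.trans ψ) - kone = kmul (tker ψ) (tker φ - kone) + (tker ψ - kone) := by
      rw [h1]; abel
    rw [h2]
    rw [θadd _ _ (tker_kmul_mem_LSet hψ (tker_sub_kone_mem_LSet hφ))
      (tker_sub_kone_mem_LSet hψ)]
    rw [θmod _ _ (tker_mem hψ) (tker_sub_kone_mem_LSet hφ)]
  -- the coboundary property on translations
  have hv : ∀ (ψ : X ≃ X), (∃ D : ℝ, ∀ y, dist (ψ y) y ≤ D) →
      θ (tker ψ - kone) = ρ.π (tker ψ) (-c) - (-c) := by
    intro ψ hψD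
    obtain ⟨Dψ, hψ⟩ := hψD
    set T : H → H := fun w => ρ.π (tker ψ) w + θ (tker ψ - kone) with hT
    have hTiso : Isometry T := by
      apply Isometry.of_dist_eq
      intro w w'
      simp only [hT]
      rw [dist_eq_norm, dist_eq_norm, add_sub_add_right_eq_sub, ← map_sub]
      exact hiso ψ Dψ hψ _
    have hTS : T '' S = S := by
      apply Set.eq_of_subset_of_subset
      · rintro _ ⟨_, ⟨φ, ⟨Dφ, hφ⟩, rfl⟩, rfl⟩
        refine ⟨φ.trans ψ, ⟨Dφ + Dψ, fun y => ?_⟩, ?_⟩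
        · have h3 := dist_triangle (ψ (φ y)) (φ y) y
          have h4 := hψ (φ y)
          have h5 := hφ y
          simp only [Equiv.trans_apply]
          linarith
        · rw [hcocycle ψ φ Dψ Dφ hψ hφ]
      · rintro w ⟨φ, ⟨Dφ, hφ⟩, rfl⟩
        have hdisp : ∀ y, dist ((φ.trans ψ.symm) y) y ≤ Dφ + Dψ := by
          intro y
          have h3 := dist_triangle (ψ.symm (φ y)) (φ y) y
          have h4 : dist (ψ.symm (φ y)) (φ y) ≤ Dψ := by
            have := hψ (ψ.symm (φ y))
            rwa [Equiv.apply_symm_apply, dist_comm] at this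
          have h5 := hφ y
          simp only [Equiv.trans_apply]
          linarith
        refine ⟨θ (tker (φ.trans ψ.symm) - kone),
          ⟨φ.trans ψ.symm, ⟨Dφ + Dψ, hdisp⟩, rfl⟩, ?_⟩
        show T (θ (tker (φ.trans ψ.symm) - kone)) = θ (tker φ - kone)
        have hc2 := hcocycle ψ (φ.trans ψ.symm) Dψ (Dφ + Dψ) hψ hdisp
        simp only [hT]
        rw [← hc2, Equiv.trans_assoc, Equiv.symm_trans_self, Equiv.trans_refl]
    have hfix := hc T hTiso hTS
    simp only [hT] at hfix
    have h6 : θ (tker ψ - kone) = c - ρ.π (tker ψ) c := eq_sub_of_add_eq' hfix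
    rw [h6, map_neg]
    abel
  -- conclusion
  refine ⟨-c, fun b hb => ?_⟩
  obtain ⟨K, g, φ, hgC, hφD, hdec⟩ := decomp hX hb
  have htermL : ∀ κ ∈ K, kmul (kdiag (g κ)) (tker (φ κ) - kone) ∈ LSet X := fun κ hκ =>
    kdiag_kmul_mem_LSet hX (hgC κ hκ).choose_spec
      (tker_sub_kone_mem_LSet (hφD κ hκ).choose_spec)
  have hθsum : θ b = ∑ κ ∈ K, θ (kmul (kdiag (g κ)) (tker (φ κ) - kone)) := by
    rw [hdec]
    exact map_sum_of_mem (LSet X) zero_mem_LSet θ θadd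
      (fun s f hf => LSet_sum hX hf) K _ htermL
  have hterm : ∀ κ ∈ K, θ (kmul (kdiag (g κ)) (tker (φ κ) - kone))
      = ρ.π (kmul (kdiag (g κ)) (tker (φ κ) - kone)) (-c) := by
    intro κ hκ
    obtain ⟨Cκ, hCκ⟩ := hgC κ hκ
    obtain ⟨Dκ, hDκ⟩ := hφD κ hκ
    rw [θmod _ _ (kdiag_mem hCκ) (tker_sub_kone_mem_LSet hDκ)]
    rw [hv (φ κ) ⟨Dκ, hDκ⟩]
    rw [map_sub, ← ContinuousLinearMap.comp_apply,
      ← ρ.map_mul _ _ (kdiag_mem hCκ) (tker_mem hDκ)]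
    have hker : kmul (kdiag (g κ)) (tker (φ κ) - kone)
        = kmul (kdiag (g κ)) (tker (φ κ)) - kdiag (g κ) := by
      funext x y
      rw [kdiag_kmul]
      show g κ x * (tker (φ κ) x y - kone x y)
        = kmul (kdiag (g κ)) (tker (φ κ)) x y - kdiag (g κ) x y
      rw [kdiag_kmul, mul_sub]
      congr 1
      by_cases h : x = y <;> simp [kone, kdiag, h]
    rw [hker, hπsub _ _ (kdiag_kmul_mem hCκ (tker_mem hDκ)) (kdiag_mem hCκ)]
    rw [ContinuousLinearMap.sub_apply]
  have hπsum : ρ.π b = ∑ κ ∈ K, ρ.π (kmul (kdiag (g κ)) (tker (φ κ) - kone)) := by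
    rw [hdec]
    exact map_sum_of_mem (RoeSet X) zero_mem_LSet.1 ρ.π ρ.map_add
      (fun s f hf => RoeSet_sum hf) K _ (fun κ hκ => (htermL κ hκ).1)
  calc θ b = ∑ κ ∈ K, θ (kmul (kdiag (g κ)) (tker (φ κ) - kone)) := hθsum
    _ = ∑ κ ∈ K, ρ.π (kmul (kdiag (g κ)) (tker (φ κ) - kone)) (-c) :=
        Finset.sum_congr rfl hterm
    _ = (∑ κ ∈ K, ρ.π (kmul (kdiag (g κ)) (tker (φ κ) - kone))) (-c) := by
        rw [ContinuousLinearMap.sum_apply]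
    _ = ρ.π b (-c) := by rw [← hπsum]

end
end
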